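/- arXiv:2204.01814 — 9 statements merged into one kernel-verified Lean document; each statement's English description precedes it below -/
import Mathlib

section
/- For 1 < p < ∞, the integral π_p := 2∫₀¹ (1 - t^p)^{-1/p} dt equals 2π/(p sin(π/p)). -/
/-! The substitution `t = x ^ (1 / p)` turns the integral into `(1 / p) B(1 / p, 1 - 1 / p)`, and
`B(s, 1 - s) = Γ(s) Γ(1 - s) = π / sin (π s)` by the reflection formula. -/

open Real MeasureTheory Set

theorem image_rpow_Ioo_zero_one {p : ℝ} (hp : 0 < p) : (· ^ p) '' Ioo (0 : ℝ) 1 = Ioo 0 1 := by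
  ext y
  constructor
  · rintro ⟨x, ⟨hx0, hx1⟩, rfl⟩
    exact ⟨rpow_pos_of_pos hx0 p, rpow_lt_one hx0.le hx1 hp⟩
  · rintro ⟨hy0, hy1⟩
    refine ⟨y ^ p⁻¹, ⟨rpow_pos_of_pos hy0 _, rpow_lt_one hy0.le hy1 (inv_pos.2 hp)⟩, ?_⟩
    simp [← rpow_mul hy0.le, hp.ne']

theorem integral_comp_rpow_Ioo_zero_one {E : Type*} [NormedAddCommGroup E] [NormedSpace ℝ E]
    (g : ℝ → E) {p : ℝ} (hp : 0 < p) :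
    ∫ x in Ioo 0 1, (p * x ^ (p - 1)) • g (x ^ p) = ∫ y in Ioo 0 1, g y := by
  conv_rhs => rw [← image_rpow_Ioo_zero_one hp]
  rw [integral_image_eq_integral_abs_deriv_smul measurableSet_Ioo
    (fun x hx ↦ (hasDerivAt_rpow_const (Or.inl hx.1.ne')).hasDerivWithinAt)
    ((rpow_left_injOn hp.ne').mono fun x hx ↦ le_of_lt hx.1)]
  refine setIntegral_congr_fun measurableSet_Ioo fun x hx ↦ ?_
  rw [abs_of_nonneg (by have := hx.1; positivity)]

theorem Complex.betaIntegral_ofReal (a b : ℝ) :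
    betaIntegral a b = ↑(∫ x in (0 : ℝ)..1, x ^ (a - 1) * (1 - x) ^ (b - 1)) := by
  rw [betaIntegral, ← intervalIntegral.integral_ofReal]
  refine intervalIntegral.integral_congr fun x hx ↦ ?_
  rw [uIcc_of_le zero_le_one] at hx
  simp only [ofReal_mul, ofReal_cpow hx.1, ofReal_cpow (sub_nonneg.2 hx.2), ofReal_sub, ofReal_one]

theorem Complex.betaIntegral_one_sub {s : ℂ} (hs0 : 0 < s.re) (hs1 : s.re < 1) :
    betaIntegral s (1 - s) = π / sin (π * s) := by
  rw [← Gamma_mul_Gamma_one_sub, Gamma_mul_Gamma_eq_betaIntegral hs0 (by simpa using hs1),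
    add_sub_cancel, Gamma_one, one_mul]

theorem integral_rpow_mul_one_sub_rpow_neg {s : ℝ} (hs0 : 0 < s) (hs1 : s < 1) :
    ∫ x in (0 : ℝ)..1, x ^ (s - 1) * (1 - x) ^ (-s) = π / Real.sin (π * s) := by
  have h := Complex.betaIntegral_one_sub (s := s) (by simpa using hs0) (by simpa using hs1)
  rw [← Complex.ofReal_one, ← Complex.ofReal_sub, Complex.betaIntegral_ofReal,
    sub_sub_cancel_left, ← Complex.ofReal_mul, ← Complex.ofReal_sin, ← Complex.ofReal_div] at h
  exact_mod_cast h

theorem pi_p_eq (p : ℝ) (hp : 1 < p) :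
    2 * ∫ t in (0:ℝ)..1, (1 - t ^ p) ^ (-(1/p)) = 2 * π / (p * Real.sin (π / p)) := by
  have hp0 : 0 < p := one_pos.trans hp
  have hq : 1 / p < 1 := (div_lt_one hp0).2 hp
  have hsubst : ∫ t in (0 : ℝ)..1, (1 - t ^ p) ^ (-(1/p))
      = 1 / p * ∫ x in (0 : ℝ)..1, x ^ (1 / p - 1) * (1 - x) ^ (-(1/p)) := by
    simp only [intervalIntegral.integral_of_le zero_le_one, integral_Ioc_eq_integral_Ioo]
    rw [← integral_comp_rpow_Ioo_zero_one _ (one_div_pos.2 hp0), ← integral_const_mul]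
    refine setIntegral_congr_fun measurableSet_Ioo fun x hx ↦ ?_
    rw [smul_eq_mul, ← rpow_mul hx.1.le, one_div_mul_cancel hp0.ne', rpow_one, mul_assoc]
  rw [hsubst, integral_rpow_mul_one_sub_rpow_neg (one_div_pos.2 hp0) hq]
  field_simp
end

section
/- For every x ∈ (0,1) and p ∈ (1,∞), the generalized inverse cosine satisfies π_p/2 - arccos_p(x) < (π_p/2)·x. -/
open Real MeasureTheory Set intervalIntegral

private lemma cbeta_eq (a b t : ℝ) (h0 : 0 ≤ t) (h1 : t ≤ 1) :
    (t:ℂ) ^ ((a:ℂ) - 1) * ((1:ℂ) - t) ^ ((b:ℂ) - 1)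
      = ((t ^ (a - 1) * (1 - t) ^ (b - 1) : ℝ) : ℂ) := by
  rw [Complex.ofReal_mul, Complex.ofReal_cpow h0, Complex.ofReal_cpow (by linarith)]
  push_cast
  ring

private lemma beta_integrable {a b : ℝ} (ha : 0 < a) (hb : 0 < b) :
    IntervalIntegrable (fun t : ℝ => t ^ (a-1) * (1-t) ^ (b-1)) volume 0 1 := by
  have h := (Complex.betaIntegral_convergent (u := (a:ℂ)) (v := (b:ℂ))
    (by simpa using ha) (by simpa using hb)).1
  rw [intervalIntegrable_iff_integrableOn_Ioc_of_le zero_le_one]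
  refine (h.re).congr ?_
  refine ((ae_restrict_iff' measurableSet_Ioc).2 (ae_of_all _ fun t ht => ?_))
  show ((t:ℂ) ^ ((a:ℂ) - 1) * ((1:ℂ) - t) ^ ((b:ℂ) - 1)).re = _
  rw [cbeta_eq a b t ht.1.le ht.2, Complex.ofReal_re]

private lemma beta_value {a b : ℝ} (ha : 0 < a) (hb : 0 < b) :
    ∫ t in (0:ℝ)..1, t ^ (a-1) * (1-t) ^ (b-1) = Gamma a * Gamma b / Gamma (a+b) := by
  have h := Complex.Gamma_mul_Gamma_eq_betaIntegral (s := (a:ℂ)) (t := (b:ℂ))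
    (by simpa using ha) (by simpa using hb)
  have hB : Complex.betaIntegral a b = ((∫ t in (0:ℝ)..1, t ^ (a-1) * (1-t) ^ (b-1) : ℝ) : ℂ) := by
    rw [Complex.betaIntegral, ← intervalIntegral.integral_ofReal]
    refine intervalIntegral.integral_congr fun t ht => ?_
    rw [uIcc_of_le zero_le_one] at ht
    exact cbeta_eq a b t ht.1 ht.2
  rw [hB, show ((a:ℂ) + b) = ((a+b:ℝ):ℂ) by push_cast; ring,
    Complex.Gamma_ofReal, Complex.Gamma_ofReal, Complex.Gamma_ofReal] at h
  have h' : Gamma a * Gamma b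
      = Gamma (a+b) * ∫ t in (0:ℝ)..1, t ^ (a-1) * (1-t) ^ (b-1) := by exact_mod_cast h
  have hne : Gamma (a+b) ≠ 0 := (Real.Gamma_pos_of_pos (by linarith)).ne'
  rw [h', mul_div_cancel_left₀ _ hne]

private lemma f_integrable {p : ℝ} (hp : 1 < p) :
    IntervalIntegrable (fun t : ℝ => (1 - t ^ p) ^ (-(1/p))) volume 0 1 := by
  have hp0 : (0:ℝ) < p := by linarith
  rw [intervalIntegrable_iff_integrableOn_Ioc_of_le zero_le_one]
  have hg : IntegrableOn (fun t : ℝ => (1 - t) ^ (-(1/p))) (Ioc 0 1) volume := by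
    rw [← intervalIntegrable_iff_integrableOn_Ioc_of_le zero_le_one]
    have h := (intervalIntegral.intervalIntegrable_rpow' (a := 0) (b := 1)
      (r := -(1/p)) (by rw [neg_lt, neg_neg]; rw [div_lt_one hp0]; linarith)).comp_sub_left 1
    simpa using h.symm
  rw [integrableOn_Ioc_iff_integrableOn_Ioo] at hg ⊢
  refine hg.integrable.mono ?_ ?_
  · refine (ContinuousOn.aestronglyMeasurable ?_ measurableSet_Ioo)
    intro t ht
    have h1 : t ^ p < 1 := Real.rpow_lt_one (le_of_lt ht.1) ht.2 hp0
    refine ContinuousAt.continuousWithinAt ?_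
    exact ((Real.continuousAt_rpow_const t p (Or.inr hp0.le)).const_sub 1).rpow_const
      (Or.inl (by linarith))
  · refine (ae_restrict_iff' measurableSet_Ioo).2 (ae_of_all _ fun t ht => ?_)
    have ht0 : 0 < t := ht.1
    have ht1 : t < 1 := ht.2
    have htp : t ^ p ≤ 1 := Real.rpow_le_one ht0.le ht1.le hp0.le
    have hb0 : 0 ≤ 1 - t ^ p := by linarith
    rw [Real.norm_eq_abs, Real.norm_eq_abs, abs_of_nonneg (Real.rpow_nonneg hb0 _),
      abs_of_nonneg (Real.rpow_nonneg (by linarith) _)]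
    have htt : t ^ p ≤ t := by
      calc t ^ p ≤ t ^ (1:ℝ) := Real.rpow_le_rpow_of_exponent_ge ht0 ht1.le hp.le
      _ = t := Real.rpow_one t
    exact Real.rpow_le_rpow_of_nonpos (by linarith) (by linarith)
      (by rw [neg_nonpos]; positivity)
private lemma integral_f_eq {p : ℝ} (hp : 1 < p) :
    ∫ t in (0:ℝ)..1, (1 - t ^ p) ^ (-(1/p)) = π / (p * Real.sin (π / p)) := by
  have hp0 : (0:ℝ) < p := by linarith
  have hq0 : (0:ℝ) < 1/p := by positivity
  have hq1 : (1:ℝ)/p < 1 := by rw [div_lt_one hp0]; linarith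
  set g : ℝ → ℝ := fun t => (1 - t ^ p) ^ (-(1/p)) with hg
  -- substitution t = u ^ (1/p)
  have hsub : (∫ u in (0:ℝ)..1, ((1/p) * u ^ (1/p - 1)) • g (u ^ (1/p)))
      = ∫ t in (0:ℝ)..1, g t := by
    have h := intervalIntegral.integral_comp_smul_deriv''' (a := 0) (b := 1)
      (f := fun u : ℝ => u ^ (1/p)) (f' := fun u : ℝ => (1/p) * u ^ (1/p - 1)) (g := g)
      ?_ ?_ ?_ ?_ ?_
    · rw [Real.zero_rpow (by positivity), Real.one_rpow] at h
      exact h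
    · intro u hu
      exact ContinuousAt.continuousWithinAt
        (Real.continuousAt_rpow_const u (1/p) (Or.inr hq0.le))
    · intro u hu
      rw [show min (0:ℝ) 1 = 0 by norm_num, show max (0:ℝ) 1 = 1 by norm_num] at hu
      have := Real.hasDerivAt_rpow_const (x := u) (p := 1/p) (Or.inl hu.1.ne')
      exact this.hasDerivWithinAt
    · -- continuity of g on image
      intro t ht
      rw [show min (0:ℝ) 1 = 0 by norm_num, show max (0:ℝ) 1 = 1 by norm_num] at ht
      obtain ⟨u, hu, rfl⟩ := ht
      have h0 : 0 < u ^ (1/p) := Real.rpow_pos_of_pos hu.1 _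
      have h1 : u ^ (1/p) < 1 := Real.rpow_lt_one hu.1.le hu.2 hq0
      have hup : (u ^ (1/p)) ^ p < 1 := Real.rpow_lt_one h0.le h1 hp0
      refine ContinuousAt.continuousWithinAt ?_
      exact ((Real.continuousAt_rpow_const _ p (Or.inr hp0.le)).const_sub 1).rpow_const
        (Or.inl (by show (1:ℝ) - (u ^ (1/p)) ^ p ≠ 0; intro hc; rw [sub_eq_zero] at hc; exact absurd hc.symm hup.ne))
    · -- integrability of g on image
      have himg : ((fun u : ℝ => u ^ (1/p)) '' (Set.uIcc 0 1)) ⊆ Icc 0 1 := by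
        rw [uIcc_of_le zero_le_one]
        rintro t ⟨u, hu, rfl⟩
        exact ⟨Real.rpow_nonneg hu.1 _, Real.rpow_le_one hu.1 hu.2 hq0.le⟩
      refine IntegrableOn.mono_set ?_ himg
      rw [integrableOn_Icc_iff_integrableOn_Ioc]
      exact (intervalIntegrable_iff_integrableOn_Ioc_of_le zero_le_one).mp (f_integrable hp)
    · -- integrability of the substituted integrand
      rw [uIcc_of_le zero_le_one]
      have hbi := ((beta_integrable hq0 (b := 1 - 1/p) (by linarith)).const_mul (1/p))
      rw [intervalIntegrable_iff_integrableOn_Ioc_of_le zero_le_one,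
        ← integrableOn_Icc_iff_integrableOn_Ioc] at hbi
      refine hbi.congr_fun (fun u hu => ?_) measurableSet_Icc
      have hup : (u ^ (1/p)) ^ p = u := by
        rw [← Real.rpow_mul hu.1, one_div_mul_cancel hp0.ne', Real.rpow_one]
      simp only [hg, smul_eq_mul, Function.comp, hup]
      ring_nf
  -- now compute the beta integral value
  rw [← hsub]
  have hcong : (∫ u in (0:ℝ)..1, ((1/p) * u ^ (1/p - 1)) • g (u ^ (1/p)))
      = ∫ u in (0:ℝ)..1, (1/p) * (u ^ (1/p - 1) * (1-u) ^ ((1 - 1/p) - 1)) := by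
    refine intervalIntegral.integral_congr fun u hu => ?_
    rw [uIcc_of_le zero_le_one] at hu
    have hup : (u ^ (1/p)) ^ p = u := by
      rw [← Real.rpow_mul hu.1, one_div_mul_cancel hp0.ne', Real.rpow_one]
    simp only [hg, smul_eq_mul, hup]
    ring_nf
  rw [hcong, intervalIntegral.integral_const_mul, beta_value hq0 (by linarith : (0:ℝ) < 1 - 1/p)]
  have hsum : (1:ℝ)/p + (1 - 1/p) = 1 := by ring
  rw [hsum, Real.Gamma_one, Real.Gamma_mul_Gamma_one_sub]
  have hsin : Real.sin (π * (1/p)) = Real.sin (π / p) := by rw [mul_one_div]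
  rw [hsin]
  have : Real.sin (π / p) ≠ 0 := by
    refine ne_of_gt (Real.sin_pos_of_pos_of_lt_pi ?_ ?_)
    · positivity
    · rw [div_lt_iff₀ hp0]; nlinarith [Real.pi_pos]
  field_simp
theorem arccos_p_lower_bound (p : ℝ) (hp : 1 < p) (x : ℝ) (hx0 : 0 < x) (hx1 : x < 1)
    (arccosp : ℝ → ℝ)
    (harccos : ∀ y ∈ Set.Icc (0:ℝ) 1, arccosp y = ∫ t in y..1, (1 - t ^ p) ^ (-(1/p)))
    (πp : ℝ) (hπp : πp = 2 * π / (p * Real.sin (π / p))) :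
    πp / 2 - arccosp x < πp / 2 * x := by
  have hp0 : (0:ℝ) < p := by linarith
  set f : ℝ → ℝ := fun t => (1 - t ^ p) ^ (-(1/p)) with hf
  -- basic monotonicity facts
  have hfle : ∀ s t : ℝ, 0 ≤ s → s ≤ t → t < 1 → f s ≤ f t := by
    intro s t hs hst ht1
    have h1 : t ^ p < 1 := Real.rpow_lt_one (hs.trans hst) ht1 hp0
    have h2 : s ^ p ≤ t ^ p := Real.rpow_le_rpow hs hst hp0.le
    exact Real.rpow_le_rpow_of_nonpos (by linarith) (by linarith) (by rw [neg_nonpos]; positivity)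
  have hflt : ∀ s t : ℝ, 0 ≤ s → s < t → t < 1 → f s < f t := by
    intro s t hs hst ht1
    have h1 : t ^ p < 1 := Real.rpow_lt_one (hs.trans hst.le) ht1 hp0
    have h2 : s ^ p < t ^ p := Real.rpow_lt_rpow hs hst hp0
    exact Real.rpow_lt_rpow_of_neg (by linarith) (by linarith) (neg_lt_zero.mpr (by positivity))
  have hfnonneg : ∀ t : ℝ, t ≤ 1 → 0 ≤ t → 0 ≤ f t := by
    intro t ht1 ht0
    have : t ^ p ≤ 1 := Real.rpow_le_one ht0 ht1 hp0.le
    exact Real.rpow_nonneg (by linarith) _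
  -- integrability on subintervals
  have hint : ∀ a b : ℝ, 0 ≤ a → a ≤ b → b ≤ 1 → IntervalIntegrable f volume a b := by
    intro a b ha hab hb
    exact (f_integrable hp).mono_set
      (by rw [uIcc_of_le hab, uIcc_of_le zero_le_one]; exact Icc_subset_Icc ha hb)
  set c : ℝ := (1 + x) / 2 with hc
  have hxc : x < c := by rw [hc]; linarith
  have hc1 : c < 1 := by rw [hc]; linarith
  -- split the total integral
  have hsplit : (∫ t in (0:ℝ)..x, f t) + (∫ t in x..1, f t) = ∫ t in (0:ℝ)..1, f t :=
    intervalIntegral.integral_add_adjacent_intervals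
      (hint 0 x le_rfl hx0.le hx1.le) (hint x 1 hx0.le hx1.le le_rfl)
  have hAsplit : (∫ t in x..c, f t) + (∫ t in c..1, f t) = ∫ t in x..1, f t :=
    intervalIntegral.integral_add_adjacent_intervals
      (hint x c hx0.le hxc.le hc1.le) (hint c 1 (by linarith) hc1.le le_rfl)
  -- S ≤ x * f x
  have hS : (∫ t in (0:ℝ)..x, f t) ≤ x * f x := by
    have h := intervalIntegral.integral_mono_on hx0.le (hint 0 x le_rfl hx0.le hx1.le)
      intervalIntegrable_const (fun t ht => hfle t x ht.1 ht.2 hx1)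
    simpa using h
  -- ∫ x..c ≥ (c - x) * f x
  have h1 : (c - x) * f x ≤ ∫ t in x..c, f t := by
    have h := intervalIntegral.integral_mono_on hxc.le intervalIntegrable_const
      (hint x c hx0.le hxc.le hc1.le) (fun t ht => hfle x t hx0.le ht.1 (lt_of_le_of_lt ht.2 hc1))
    simpa using h
  -- ∫ c..1 ≥ (1 - c) * f c
  have h2 : (1 - c) * f c ≤ ∫ t in c..1, f t := by
    rw [intervalIntegral.integral_of_le hc1.le, MeasureTheory.integral_Ioc_eq_integral_Ioo]
    have hmono := MeasureTheory.setIntegral_mono_on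
      ((integrableOn_const_iff).mpr (Or.inr (by rw [Real.volume_Ioo]; exact ENNReal.ofReal_lt_top)))
      (((hint c 1 (by linarith) hc1.le le_rfl).1).mono_set Ioo_subset_Ioc_self)
      measurableSet_Ioo
      (fun t ht => hfle c t (by linarith) ht.1.le ht.2)
    calc (1 - c) * f c = (volume (Ioo c 1)).toReal • f c := by
          rw [Real.volume_Ioo, ENNReal.toReal_ofReal (by linarith)]; simp [mul_comm]
    _ = ∫ _ in Ioo c 1, f c := (MeasureTheory.setIntegral_const (f c)).symm
    _ ≤ ∫ t in Ioo c 1, f t := hmono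
  have hfc : f x < f c := hflt x c hx0.le hxc hc1
  have hfx : 0 ≤ f x := hfnonneg x hx1.le hx0.le
  -- value of the total integral
  have hV : (∫ t in (0:ℝ)..1, f t) = πp / 2 := by
    rw [hπp, integral_f_eq hp]; ring
  have hA : arccosp x = ∫ t in x..1, f t := harccos x ⟨hx0.le, hx1.le⟩
  rw [hA, ← hV, ← hsplit]
  have key : (∫ t in (0:ℝ)..x, f t) * (1 - x) < (∫ t in x..1, f t) * x := by
    have hAx : (c - x) * f x + (1 - c) * f c ≤ ∫ t in x..1, f t := by
      rw [← hAsplit]; linarith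
    have hprod : 0 < x * ((1 - c) * (f c - f x)) :=
      mul_pos hx0 (mul_pos (by linarith) (by linarith))
    have e1 := mul_le_mul_of_nonneg_right hS (by linarith : (0:ℝ) ≤ 1 - x)
    have e2 := mul_le_mul_of_nonneg_left hAx hx0.le
    have hcx : c - x = 1 - c := by rw [hc]; ring
    nlinarith [e1, e2, hprod]
  nlinarith [key]
end

section
/- Let p ∈ (1,∞) and consider the p-cosine function cos_p, the inverse of arccos_p on [0, π_p/2]. Then cos_p is differentiable on (0, π_p/2) and satisfies the ODE (|X'|^{p-2}X')' + (p-1)|X|^{p-2}X = 0 on (0, π_p/2), with X(0) = 1 and X'(0) = 0, where X(s) = cos_p(s). -/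
open Real

theorem cos_p_ode (p : ℝ) (hp : 1 < p)
    (arccosp : ℝ → ℝ)
    (harccos : ∀ x ∈ Set.Icc (0:ℝ) 1, arccosp x = ∫ t in x..1, (1 - t ^ p) ^ (-(1/p)))
    (πp : ℝ) (hπp : πp = 2 * arccosp 0)
    (X : ℝ → ℝ)
    (hX : ∀ s ∈ Set.Icc 0 (πp / 2), X s ∈ Set.Icc (0:ℝ) 1 ∧ arccosp (X s) = s) :
    ∃ X' : ℝ → ℝ,
      (∀ s ∈ Set.Ioo 0 (πp / 2), HasDerivAt X (X' s) s) ∧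
      X 0 = 1 ∧ X' 0 = 0 ∧
      ∀ s ∈ Set.Ioo 0 (πp / 2),
        HasDerivAt (fun t => |X' t| ^ (p - 2) * X' t)
          (-((p - 1) * |X s| ^ (p - 2) * X s)) s := by
  have h0p : (0:ℝ) < p := lt_trans one_pos hp
  set g : ℝ → ℝ := fun t => (1 - t ^ p) ^ (-(1/p)) with hg_def
  -- integrability
  have hgint01 : IntervalIntegrable g MeasureTheory.volume 0 1 := by
    have hmaj : IntervalIntegrable (fun t : ℝ => (1 - t) ^ (-(1/p))) MeasureTheory.volume 0 1 := by
      have h1 : (-1 : ℝ) < -(1/p) := by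
        rw [neg_lt_neg_iff, div_lt_one h0p]; exact hp
      have := (intervalIntegral.intervalIntegrable_rpow' (a := (0:ℝ)) (b := 1) h1).comp_sub_left 1
      simpa using this.symm
    have hm : Measurable g := by fun_prop
    refine hmaj.mono_fun hm.aestronglyMeasurable ?_
    rw [Set.uIoc_of_le (by norm_num : (0:ℝ) ≤ 1)]
    refine (MeasureTheory.ae_restrict_iff' measurableSet_Ioc).2 (Filter.Eventually.of_forall ?_)
    intro t ht
    rcases eq_or_lt_of_le ht.2 with h1 | h1
    · subst h1
      simp [hg_def, Real.zero_rpow (neg_ne_zero.2 (by positivity : (1:ℝ)/p ≠ 0)), Real.one_rpow]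
    · have htp : t ^ p ≤ t := by
        calc t ^ p ≤ t ^ (1:ℝ) := Real.rpow_le_rpow_of_exponent_ge ht.1 h1.le hp.le
        _ = t := Real.rpow_one t
      have h1t : 0 < 1 - t := by linarith
      have hle : g t ≤ (1 - t) ^ (-(1/p)) :=
        Real.rpow_le_rpow_of_nonpos h1t (by linarith) (neg_nonpos.2 (by positivity))
      have hnn : 0 ≤ g t := Real.rpow_nonneg (by linarith) _
      simp only [Real.norm_eq_abs, abs_of_nonneg hnn,
        abs_of_nonneg (Real.rpow_nonneg h1t.le (-(1/p)))]
      exact hle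
  have hsub : ∀ a ∈ Set.Icc (0:ℝ) 1, ∀ b ∈ Set.Icc (0:ℝ) 1,
      IntervalIntegrable g MeasureTheory.volume a b := by
    intro a ha b hb
    refine hgint01.mono_set ?_
    rw [Set.uIcc_of_le (by norm_num : (0:ℝ) ≤ 1)]
    exact Set.uIcc_subset_Icc ha hb
  -- splitting
  have hsplit : ∀ x ∈ Set.Icc (0:ℝ) 1, ∀ y ∈ Set.Icc (0:ℝ) 1,
      arccosp x - arccosp y = ∫ t in x..y, g t := by
    intro x hx y hy
    have h1 : (∫ t in x..y, g t) + ∫ t in y..1, g t = ∫ t in x..1, g t :=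
      intervalIntegral.integral_add_adjacent_intervals (hsub x hx y hy)
        (hsub y hy 1 (by norm_num))
    rw [harccos x hx, harccos y hy]
    linarith
  -- positivity of the integral
  have hposint : ∀ x y : ℝ, 0 ≤ x → x < y → y ≤ 1 → 0 < ∫ t in x..y, g t := by
    intro x y hx hxy hy
    refine intervalIntegral.intervalIntegral_pos_of_pos_on
      (hsub x ⟨hx, by linarith⟩ y ⟨by linarith, hy⟩) ?_ hxy
    intro t ht
    have ht0 : 0 < t := lt_of_le_of_lt hx ht.1
    have htp : t ^ p < 1 := Real.rpow_lt_one ht0.le (lt_of_lt_of_le ht.2 hy) h0p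
    exact Real.rpow_pos_of_pos (by linarith) _
  -- strict antitonicity
  have hanti : ∀ x ∈ Set.Icc (0:ℝ) 1, ∀ y ∈ Set.Icc (0:ℝ) 1, x < y →
      arccosp y < arccosp x := by
    intro x hx y hy hxy
    have h1 := hsplit x hx y hy
    have h2 := hposint x y hx.1 hxy hy.2
    linarith
  have harccos1 : arccosp 1 = 0 := by
    rw [harccos 1 (by norm_num)]
    exact intervalIntegral.integral_same
  have hπ2 : πp / 2 = arccosp 0 := by rw [hπp]; ring
  have hπpos : 0 < πp / 2 := by
    rw [hπ2]
    have := hanti 0 (by norm_num) 1 (by norm_num) one_pos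
    linarith
  -- X 0 = 1
  have hX1 : X 0 = 1 := by
    obtain ⟨hmem, heq⟩ := hX 0 ⟨le_refl 0, hπpos.le⟩
    by_contra hne
    have h1 : X 0 < 1 := lt_of_le_of_ne hmem.2 hne
    have := hanti (X 0) hmem 1 (by norm_num) h1
    rw [harccos1, heq] at this
    exact absurd this (lt_irrefl 0)
  -- interior values
  have hXint : ∀ s ∈ Set.Ioo 0 (πp/2), 0 < X s ∧ X s < 1 := by
    intro s hs
    obtain ⟨hmem, heq⟩ := hX s ⟨hs.1.le, hs.2.le⟩
    constructor
    · rcases lt_or_eq_of_le hmem.1 with h | h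
      · exact h
      · exfalso
        rw [← h, ← hπ2] at heq
        rw [heq] at hs
        exact absurd hs.2 (lt_irrefl _)
    · rcases lt_or_eq_of_le hmem.2 with h | h
      · exact h
      · exfalso
        rw [h, harccos1] at heq
        rw [← heq] at hs
        exact absurd hs.1 (lt_irrefl _)
  -- arccosp maps [0,1] into [0, πp/2]
  have hrange : ∀ x ∈ Set.Icc (0:ℝ) 1, arccosp x ∈ Set.Icc 0 (πp/2) := by
    intro x hx
    constructor
    · rcases lt_or_eq_of_le hx.2 with h | h
      · have := hanti x hx 1 (by norm_num) h
        rw [harccos1] at this; linarith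
      · rw [h, harccos1]
    · rw [hπ2]
      rcases lt_or_eq_of_le hx.1 with h | h
      · exact (hanti 0 (by norm_num) x hx h).le
      · rw [← h]
  -- continuity of X at interior points
  have hcont : ∀ s ∈ Set.Ioo 0 (πp/2), ContinuousAt X s := by
    intro s hs
    obtain ⟨hXs0, hXs1⟩ := hXint s hs
    obtain ⟨hmem, heq⟩ := hX s ⟨hs.1.le, hs.2.le⟩
    rw [ContinuousAt, tendsto_order]
    constructor
    · intro a ha
      set x₂ : ℝ := max ((X s + a)/2) (X s / 2) with hx2def
      have hx2a : a < x₂ := lt_of_lt_of_le (by linarith) (le_max_left _ _)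
      have hx2pos : 0 < x₂ := lt_of_lt_of_le (by linarith) (le_max_right _ _)
      have hx2lt : x₂ < X s := max_lt (by linarith) (by linarith)
      have hx2mem : x₂ ∈ Set.Icc (0:ℝ) 1 := ⟨hx2pos.le, by linarith⟩
      have hs2 : s < arccosp x₂ := by
        have := hanti x₂ hx2mem (X s) hmem hx2lt
        rwa [heq] at this
      have hs2le : arccosp x₂ ≤ πp/2 := (hrange x₂ hx2mem).2
      refine Filter.eventually_of_mem (Ioo_mem_nhds hs.1 hs2) ?_
      intro t ht
      obtain ⟨hmt, het⟩ := hX t ⟨ht.1.le, le_trans ht.2.le hs2le⟩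
      by_contra hcon
      push_neg at hcon
      have hXtlt : X t < x₂ := lt_of_le_of_lt hcon hx2a
      have := hanti (X t) hmt x₂ hx2mem hXtlt
      rw [het] at this
      exact absurd (lt_trans ht.2 this) (lt_irrefl _)
    · intro b hb
      set x₁ : ℝ := min ((X s + b)/2) ((X s + 1)/2) with hx1def
      have hx1b : x₁ < b := lt_of_le_of_lt (min_le_left _ _) (by linarith)
      have hx1gt : X s < x₁ := lt_min (by linarith) (by linarith)
      have hx1lt1 : x₁ < 1 := lt_of_le_of_lt (min_le_right _ _) (by linarith)
      have hx1mem : x₁ ∈ Set.Icc (0:ℝ) 1 := ⟨by linarith, hx1lt1.le⟩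
      have hs1 : arccosp x₁ < s := by
        have := hanti (X s) hmem x₁ hx1mem hx1gt
        rwa [heq] at this
      have hs1ge : 0 ≤ arccosp x₁ := (hrange x₁ hx1mem).1
      refine Filter.eventually_of_mem (Ioo_mem_nhds hs1 hs.2) ?_
      intro t ht
      obtain ⟨hmt, het⟩ := hX t ⟨le_trans hs1ge ht.1.le, ht.2.le⟩
      by_contra hcon
      push_neg at hcon
      have hXtgt : x₁ < X t := lt_of_lt_of_le hx1b hcon
      have := hanti x₁ hx1mem (X t) hmt hXtgt
      rw [het] at this
      exact absurd (lt_trans this ht.1) (lt_irrefl _)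
  -- the candidate derivative
  set X' : ℝ → ℝ := fun u => -(1 - X u ^ p) ^ (1/p) with hX'def
  -- derivative of X at interior points
  have hXd : ∀ s ∈ Set.Ioo 0 (πp/2), HasDerivAt X (X' s) s := by
    intro s hs
    obtain ⟨hXs0, hXs1⟩ := hXint s hs
    obtain ⟨hmem, heq⟩ := hX s ⟨hs.1.le, hs.2.le⟩
    have hxppos : 0 < 1 - X s ^ p := by
      have : X s ^ p < 1 := Real.rpow_lt_one hXs0.le hXs1 h0p
      linarith
    -- derivative of arccosp at X s
    have hgc : ContinuousAt g (X s) := by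
      have h1 : ContinuousAt (fun t : ℝ => 1 - t ^ p) (X s) :=
        continuousAt_const.sub (Real.continuousAt_rpow_const _ _ (Or.inl hXs0.ne'))
      exact h1.rpow_const (Or.inl hxppos.ne')
    have hmeasg : StronglyMeasurableAtFilter g (nhds (X s)) :=
      ⟨Set.univ, Filter.univ_mem, (by fun_prop : Measurable g).aestronglyMeasurable.restrict⟩
    have hFTC : HasDerivAt (fun u => ∫ t in u..1, g t) (-g (X s)) (X s) :=
      intervalIntegral.integral_hasDerivAt_left
        (hsub (X s) ⟨hXs0.le, hXs1.le⟩ 1 (by norm_num)) hmeasg hgc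
    have heqev : arccosp =ᶠ[nhds (X s)] fun u => ∫ t in u..1, g t :=
      Filter.eventuallyEq_of_mem (Icc_mem_nhds hXs0 hXs1) harccos
    have hda : HasDerivAt arccosp (-g (X s)) (X s) := hFTC.congr_of_eventuallyEq heqev
    have hgpos : 0 < g (X s) := Real.rpow_pos_of_pos hxppos _
    have hinv : HasDerivAt X (-g (X s))⁻¹ s := by
      refine HasDerivAt.of_local_left_inverse (hcont s hs) hda (by linarith) ?_
      refine Filter.eventually_of_mem (Ioo_mem_nhds hs.1 hs.2) ?_
      intro y hy
      exact (hX y ⟨hy.1.le, hy.2.le⟩).2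
    have hXval : (-g (X s))⁻¹ = X' s := by
      rw [hX'def]
      simp only [hg_def]
      rw [Real.rpow_neg hxppos.le, inv_neg, inv_inv]
    rwa [hXval] at hinv
  refine ⟨X', hXd, hX1, ?_, ?_⟩
  · -- X' 0 = 0
    rw [hX'def]
    simp only [hX1, Real.one_rpow]
    rw [sub_self, Real.zero_rpow (by positivity : (1:ℝ)/p ≠ 0), neg_zero]
  · -- the ODE
    intro s hs
    obtain ⟨hXs0, hXs1⟩ := hXint s hs
    have hxppos : 0 < 1 - X s ^ p := by
      have : X s ^ p < 1 := Real.rpow_lt_one hXs0.le hXs1 h0p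
      linarith
    -- the nicer form of |X'|^(p-2) * X'
    have hform : ∀ t ∈ Set.Ioo 0 (πp/2),
        |X' t| ^ (p - 2) * X' t = -(1 - X t ^ p) ^ ((p-1)/p) := by
      intro t ht
      obtain ⟨h0, h1⟩ := hXint t ht
      have hwpos : 0 < 1 - X t ^ p := by
        have : X t ^ p < 1 := Real.rpow_lt_one h0.le h1 h0p
        linarith
      have hrpos : 0 < (1 - X t ^ p) ^ (1/p) := Real.rpow_pos_of_pos hwpos _
      have habs : |X' t| = (1 - X t ^ p) ^ (1/p) := by
        rw [hX'def]; simp only [abs_neg]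
        exact abs_of_pos hrpos
      rw [habs, hX'def]
      simp only
      rw [← Real.rpow_mul hwpos.le, mul_neg, ← Real.rpow_add hwpos]
      congr 1
      congr 1
      field_simp
      ring
    -- chain rule computation
    have hXds := hXd s hs
    have hXp : HasDerivAt (fun t => X t ^ p) (p * X s ^ (p-1) * X' s) s := by
      have h := (Real.hasDerivAt_rpow_const (x := X s) (p := p) (Or.inl hXs0.ne')).comp s hXds
      simpa [Function.comp_def, mul_assoc] using h
    have hw : HasDerivAt (fun t => 1 - X t ^ p) (-(p * X s ^ (p-1) * X' s)) s := by
      simpa [Pi.sub_def] using (hasDerivAt_const s (1:ℝ)).sub hXp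
    have hq : HasDerivAt (fun t => (1 - X t ^ p) ^ ((p-1)/p))
        ((p-1)/p * (1 - X s ^ p) ^ ((p-1)/p - 1) * -(p * X s ^ (p-1) * X' s)) s := by
      have h := (Real.hasDerivAt_rpow_const (x := 1 - X s ^ p) (p := (p-1)/p)
        (Or.inl hxppos.ne')).comp s hw
      simpa [Function.comp_def, mul_assoc] using h
    have hfin : HasDerivAt (fun t => |X' t| ^ (p - 2) * X' t)
        (-((p-1)/p * (1 - X s ^ p) ^ ((p-1)/p - 1) * -(p * X s ^ (p-1) * X' s))) s := by
      refine HasDerivAt.congr_of_eventuallyEq hq.neg ?_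
      exact Filter.eventuallyEq_of_mem (Ioo_mem_nhds hs.1 hs.2) hform
    have hval : -((p-1)/p * (1 - X s ^ p) ^ ((p-1)/p - 1) * -(p * X s ^ (p-1) * X' s))
        = -((p - 1) * |X s| ^ (p - 2) * X s) := by
      have habsX : |X s| = X s := abs_of_pos hXs0
      have hws1 : (1 - X s ^ p) ^ ((p-1)/p - 1) * (1 - X s ^ p) ^ (1/p) = 1 := by
        rw [← Real.rpow_add hxppos]
        have he : (p-1)/p - 1 + 1/p = 0 := by field_simp; ring
        rw [he, Real.rpow_zero]
      have hXs2 : X s ^ (p-2) * X s = X s ^ (p-1) := by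
        rw [← Real.rpow_add_one hXs0.ne']
        congr 1
        ring
      have hX's : X' s = -(1 - X s ^ p) ^ (1/p) := by rw [hX'def]
      rw [habsX, hX's]
      have hqp : (p-1)/p * p = p - 1 := by field_simp
      have e1 : (p-1)/p * (1 - X s ^ p) ^ ((p-1)/p - 1) * -(p * X s ^ (p-1) * -((1 - X s ^ p) ^ (1/p)))
          = ((p-1)/p * p) * ((1 - X s ^ p) ^ ((p-1)/p - 1) * (1 - X s ^ p) ^ (1/p)) * X s ^ (p-1) := by
        ring
      rw [e1, hqp, hws1, mul_one, mul_assoc, hXs2]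
    rw [← hval]
    exact hfin
end

section
/- Let p ∈ (1,∞) and define arccosh_p(x) = ∫₁ˣ (t^p - 1)^{-1/p} dt for x ≥ 1, with inverse cosh_p : [0,∞) → [1,∞). Then the function X(s) = cosh_p(ν^{1/p} s) with ν > 0 satisfies X'(s) = ν^{1/p}(X(s)^p - 1)^{1/p} on (0, ∞), and (|X'|^{p-2}X')' = (p-1)ν|X|^{p-2}X. -/
open Real

theorem cosh_p_ode (p : ℝ) (hp : 1 < p)
    (arccoshp : ℝ → ℝ)
    (harccosh : ∀ x, 1 ≤ x → arccoshp x = ∫ t in (1:ℝ)..x, (t ^ p - 1) ^ (-(1/p)))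
    (coshp : ℝ → ℝ)
    (hcosh : ∀ t, 0 ≤ t → 1 ≤ coshp t ∧ arccoshp (coshp t) = t)
    (ν : ℝ) (hν : 0 < ν)
    (X : ℝ → ℝ) (hX : ∀ s, X s = coshp (ν ^ (1/p) * s)) :
    ∀ s ∈ Set.Ioi (0:ℝ),
      HasDerivAt X (ν ^ (1/p) * (X s ^ p - 1) ^ (1/p)) s ∧
      HasDerivAt (fun t => |ν ^ (1/p) * (X t ^ p - 1) ^ (1/p)| ^ (p - 2) *
          (ν ^ (1/p) * (X t ^ p - 1) ^ (1/p)))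
        ((p - 1) * ν * |X s| ^ (p - 2) * X s) s := by
  have hp0 : (0:ℝ) < p := by linarith
  set c : ℝ := ν ^ (1/p) with hc_def
  have hc : 0 < c := Real.rpow_pos_of_pos hν _
  set f : ℝ → ℝ := fun t => (t ^ p - 1) ^ (-(1/p)) with hf_def
  -- continuity of f on (1, ∞)
  have hfc : ContinuousOn f (Set.Ioi 1) := by
    intro t ht
    rw [Set.mem_Ioi] at ht
    have ht0 : (0:ℝ) < t := by linarith
    have htp : 1 < t ^ p := by
      calc (1:ℝ) = 1 ^ p := (Real.one_rpow p).symm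
      _ < t ^ p := Real.rpow_lt_rpow zero_le_one ht hp0
    have h1 : ContinuousAt (fun u : ℝ => u ^ p - 1) t :=
      (Real.continuousAt_rpow_const t p (Or.inl ht0.ne')).sub continuousAt_const
    exact (h1.rpow_const (Or.inl (by linarith))).continuousWithinAt
  -- interval integrability of f on [1, x] for x ≥ 1
  have hint : ∀ x : ℝ, 1 ≤ x → IntervalIntegrable f MeasureTheory.volume 1 x := by
    intro x hx
    have hg : IntervalIntegrable (fun t : ℝ => (t - 1) ^ (-(1/p))) MeasureTheory.volume 1 x := by
      have h1 : IntervalIntegrable (fun t : ℝ => t ^ (-(1/p))) MeasureTheory.volume 0 (x - 1) :=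
        intervalIntegral.intervalIntegrable_rpow' (by
          rw [neg_lt, neg_neg]
          calc (1:ℝ)/p < 1 := by rw [div_lt_one hp0]; exact hp
          _ ≤ 1 := le_refl _)
      simpa using h1.comp_sub_right 1
    refine hg.mono_fun' ?_ ?_
    · rw [Set.uIoc_of_le hx]
      exact (hfc.mono (Set.Ioc_subset_Ioi_self)).aestronglyMeasurable measurableSet_Ioc
    rw [Filter.EventuallyLE, MeasureTheory.ae_restrict_iff' measurableSet_uIoc]
    refine Filter.Eventually.of_forall (fun t ht => ?_)
    rw [Set.uIoc_of_le hx] at ht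
    have ht1 : 1 < t := ht.1
    have h1 : t ≤ t ^ p := by
      calc t = t ^ (1:ℝ) := (Real.rpow_one t).symm
      _ ≤ t ^ p := Real.rpow_le_rpow_of_exponent_le ht1.le hp.le
    have ht0 : 0 < t - 1 := by linarith
    have htp0 : 0 < t ^ p - 1 := by linarith
    have hfnn : 0 ≤ f t := Real.rpow_nonneg htp0.le _
    rw [Real.norm_of_nonneg hfnn]
    exact Real.rpow_le_rpow_of_nonpos ht0 (by linarith)
      (neg_nonpos.mpr (by positivity))
  -- arccoshp 1 = 0
  have harc1 : arccoshp 1 = 0 := by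
    rw [harccosh 1 le_rfl, intervalIntegral.integral_same]
  -- strict monotonicity of arccoshp on [1, ∞)
  have hmono : StrictMonoOn arccoshp (Set.Ici (1:ℝ)) := by
    intro a ha b hb hab
    rw [Set.mem_Ici] at ha hb
    have hia : IntervalIntegrable f MeasureTheory.volume 1 a := hint a ha
    have hib : IntervalIntegrable f MeasureTheory.volume 1 b := hint b hb
    have hiab : IntervalIntegrable f MeasureTheory.volume a b :=
      (hib.mono_set (by rw [Set.uIcc_of_le hab.le, Set.uIcc_of_le hb]
                        exact Set.Icc_subset_Icc ha le_rfl))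
    have hpos : 0 < ∫ t in a..b, f t := by
      refine intervalIntegral.intervalIntegral_pos_of_pos_on hiab ?_ hab
      intro t ht
      have ht1 : 1 < t := lt_of_le_of_lt ha ht.1
      have : 0 < t ^ p - 1 := by
        have : (1:ℝ) < t ^ p := by
          calc (1:ℝ) = 1 ^ p := (Real.one_rpow p).symm
          _ < t ^ p := Real.rpow_lt_rpow zero_le_one ht1 hp0
        linarith
      exact Real.rpow_pos_of_pos this _
    have hsum : arccoshp b = arccoshp a + ∫ t in a..b, f t := by
      rw [harccosh a ha, harccosh b hb]
      rw [← intervalIntegral.integral_add_adjacent_intervals hia hiab]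
    linarith
  -- coshp t > 1 for t > 0
  have hcosh_gt : ∀ t : ℝ, 0 < t → 1 < coshp t := by
    intro t ht
    rcases (hcosh t ht.le) with ⟨h1, h2⟩
    rcases eq_or_lt_of_le h1 with h | h
    · exfalso; rw [← h, harc1] at h2; linarith
    · exact h
  -- arccoshp reflects order on Ici 1
  have hrefl : ∀ a b : ℝ, 1 ≤ a → 1 ≤ b → arccoshp a < arccoshp b → a < b := by
    intro a b ha hb h
    by_contra hab
    push_neg at hab
    rcases eq_or_lt_of_le hab with h' | h'
    · rw [h'] at h; exact lt_irrefl _ h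
    · exact absurd (hmono hb ha h') (by linarith)
  -- continuity of coshp at τ > 0
  have hcont : ∀ τ : ℝ, 0 < τ → ContinuousAt coshp τ := by
    intro τ hτ
    rw [Metric.continuousAt_iff]
    intro ε hε
    set x := coshp τ with hx_def
    have hx1 : 1 < x := hcosh_gt τ hτ
    have harcx : arccoshp x = τ := (hcosh τ hτ.le).2
    set ε' : ℝ := min ε ((x - 1) / 2) with hε'_def
    have hε'0 : 0 < ε' := lt_min hε (by linarith)
    have hε'le : ε' ≤ ε := min_le_left _ _
    have hε'le2 : ε' ≤ (x - 1) / 2 := min_le_right _ _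
    have hxl : 1 ≤ x - ε' := by linarith
    have hxr : 1 ≤ x + ε' := by linarith
    have h1 : arccoshp (x - ε') < τ := by
      rw [← harcx]; exact hmono hxl (by linarith : (1:ℝ) ≤ x) (by linarith)
    have h2 : τ < arccoshp (x + ε') := by
      rw [← harcx]; exact hmono (by linarith : (1:ℝ) ≤ x) hxr (by linarith)
    have h0 : 0 ≤ arccoshp (x - ε') := by
      rcases eq_or_lt_of_le hxl with h | h
      · rw [← h, harc1]
      · rw [← harc1]; exact (hmono (Set.mem_Ici.mpr le_rfl) hxl h).le
    refine ⟨min (τ - arccoshp (x - ε')) (arccoshp (x + ε') - τ),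
      lt_min (by linarith) (by linarith), ?_⟩
    intro y hy
    rw [Real.dist_eq] at hy
    have hy1 : arccoshp (x - ε') < y := by
      have := abs_lt.1 hy
      have := lt_min_iff.1 (lt_of_abs_lt hy) |>.1
      rcases abs_lt.1 hy with ⟨hl, hr⟩
      have : -(τ - arccoshp (x - ε')) < y - τ :=
        lt_of_le_of_lt (by simp [min_le_left]; linarith [min_le_left (τ - arccoshp (x - ε')) (arccoshp (x + ε') - τ)]) hl
      linarith
    have hy2 : y < arccoshp (x + ε') := by
      rcases abs_lt.1 hy with ⟨hl, hr⟩
      have := min_le_right (τ - arccoshp (x - ε')) (arccoshp (x + ε') - τ)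
      linarith
    have hy0 : 0 ≤ y := le_trans h0 hy1.le
    rcases hcosh y hy0 with ⟨hcy1, hcy2⟩
    have hlt1 : x - ε' < coshp y := by
      refine hrefl _ _ hxl hcy1 ?_
      rw [hcy2]; exact hy1
    have hlt2 : coshp y < x + ε' := by
      refine hrefl _ _ hcy1 hxr ?_
      rw [hcy2]; exact hy2
    rw [Real.dist_eq, abs_lt]
    constructor <;> [linarith; linarith]
  -- derivative of arccoshp at x > 1
  have hdarc : ∀ x : ℝ, 1 < x → HasDerivAt arccoshp (f x) x := by
    intro x hx
    have hF : HasDerivAt (fun u => ∫ t in (1:ℝ)..u, f t) (f x) x := by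
      refine intervalIntegral.integral_hasDerivAt_right (hint x hx.le)
        (hfc.stronglyMeasurableAtFilter isOpen_Ioi x hx) ?_
      have hx0 : (0:ℝ) < x := by linarith
      have hxp : 1 < x ^ p := by
        calc (1:ℝ) = 1 ^ p := (Real.one_rpow p).symm
        _ < x ^ p := Real.rpow_lt_rpow zero_le_one hx hp0
      have h1 : ContinuousAt (fun t : ℝ => t ^ p - 1) x :=
        ((Real.continuousAt_rpow_const x p (Or.inl hx0.ne')).sub continuousAt_const)
      exact h1.rpow_const (Or.inl (by linarith))
    refine hF.congr_of_eventuallyEq ?_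
    have : Set.Ioi (1:ℝ) ∈ nhds x := Ioi_mem_nhds hx
    filter_upwards [this] with y hy
    exact harccosh y (le_of_lt hy)
  -- derivative of coshp at τ > 0
  have hdcosh : ∀ τ : ℝ, 0 < τ → HasDerivAt coshp ((f (coshp τ))⁻¹) τ := by
    intro τ hτ
    refine HasDerivAt.of_local_left_inverse (hcont τ hτ) (hdarc _ (hcosh_gt τ hτ)) ?_ ?_
    · have h1 : 1 < coshp τ := hcosh_gt τ hτ
      have hxp : 0 < (coshp τ) ^ p - 1 := by
        have : (1:ℝ) < (coshp τ) ^ p := by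
          calc (1:ℝ) = 1 ^ p := (Real.one_rpow p).symm
          _ < (coshp τ) ^ p := Real.rpow_lt_rpow zero_le_one h1 hp0
        linarith
      exact (Real.rpow_pos_of_pos hxp _).ne'
    · filter_upwards [Ioi_mem_nhds hτ] with y hy
      exact (hcosh y (le_of_lt hy)).2
  -- now the main statement
  intro s hs
  rw [Set.mem_Ioi] at hs
  have hcs : 0 < c * s := mul_pos hc hs
  have hXs1 : 1 < X s := by rw [hX]; exact hcosh_gt _ hcs
  have hXsp : 0 < X s ^ p - 1 := by
    have : (1:ℝ) < X s ^ p := by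
      calc (1:ℝ) = 1 ^ p := (Real.one_rpow p).symm
      _ < X s ^ p := Real.rpow_lt_rpow zero_le_one hXs1 hp0
    linarith
  -- first derivative
  have hXd : HasDerivAt X (c * (X s ^ p - 1) ^ (1/p)) s := by
    have hlin : HasDerivAt (fun t : ℝ => c * t) c s := by
      simpa using (hasDerivAt_id s).const_mul c
    have h1 : HasDerivAt (fun t => coshp (c * t)) ((f (coshp (c * s)))⁻¹ * c) s :=
      (hdcosh (c * s) hcs).comp s hlin
    have hXeq : X = fun t => coshp (c * t) := funext hX
    rw [← hXeq] at h1
    have : (f (coshp (c * s)))⁻¹ = (X s ^ p - 1) ^ (1/p) := by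
      rw [← hX s, hf_def]
      simp only
      rw [Real.rpow_neg hXsp.le, inv_inv]
    rw [this, mul_comm] at h1
    exact h1
  refine ⟨hXd, ?_⟩
  -- second derivative
  have hA : ∀ t : ℝ, 0 < t → 0 < X t ^ p - 1 := by
    intro t ht
    have h1 : 1 < X t := by rw [hX]; exact hcosh_gt _ (mul_pos hc ht)
    have : (1:ℝ) < X t ^ p := by
      calc (1:ℝ) = 1 ^ p := (Real.one_rpow p).symm
      _ < X t ^ p := Real.rpow_lt_rpow zero_le_one h1 hp0
    linarith
  -- the function equals g t = c^(p-1) * (X t ^ p - 1) ^ ((p-1)/p) near s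
  have heq : (fun t => |c * (X t ^ p - 1) ^ (1/p)| ^ (p - 2) * (c * (X t ^ p - 1) ^ (1/p)))
      =ᶠ[nhds s] (fun t => c ^ (p-1) * (X t ^ p - 1) ^ ((p-1)/p)) := by
    filter_upwards [Ioi_mem_nhds hs] with t ht
    have hAt : 0 < X t ^ p - 1 := hA t ht
    have ha : 0 < c * (X t ^ p - 1) ^ (1/p) :=
      mul_pos hc (Real.rpow_pos_of_pos hAt _)
    rw [abs_of_pos ha]
    rw [← Real.rpow_add_one ha.ne' (p - 2)]
    have h21 : p - 2 + 1 = p - 1 := by ring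
    rw [h21, Real.mul_rpow hc.le (Real.rpow_nonneg hAt.le _),
      ← Real.rpow_mul hAt.le]
    congr 2
    ring
  -- derivative of g
  have hXs0 : 0 < X s := by linarith
  have h2 : HasDerivAt (fun t => X t ^ p)
      ((c * (X s ^ p - 1) ^ (1/p)) * p * X s ^ (p - 1)) s :=
    hXd.rpow_const (Or.inl hXs0.ne')
  have h3 : HasDerivAt (fun t => (X t ^ p - 1) ^ ((p-1)/p))
      ((c * (X s ^ p - 1) ^ (1/p) * p * X s ^ (p - 1)) * ((p-1)/p) *
        (X s ^ p - 1) ^ ((p-1)/p - 1)) s :=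
    (h2.sub_const 1).rpow_const (Or.inl hXsp.ne')
  have h5 := h3.const_mul (c ^ (p - 1))
  have H := h5.congr_of_eventuallyEq heq
  refine H.congr_deriv ?_
  symm
  -- equality of derivatives
  rw [abs_of_pos hXs0]
  have e1 : (X s ^ p - 1) ^ (1/p) * (X s ^ p - 1) ^ ((p-1)/p - 1) = 1 := by
    rw [← Real.rpow_add hXsp]
    have h0 : 1/p + ((p-1)/p - 1) = 0 := by field_simp; ring
    rw [h0, Real.rpow_zero]
  have e2 : c ^ (p-1) * c = c ^ p := by
    rw [← Real.rpow_add_one hc.ne' (p-1)]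
    congr 1; ring
  have e3 : X s ^ (p-2) * X s = X s ^ (p-1) := by
    rw [← Real.rpow_add_one hXs0.ne' (p-2)]
    congr 1; ring
  have hcp : c ^ p = ν := by
    rw [hc_def, ← Real.rpow_mul hν.le, one_div_mul_cancel hp0.ne', Real.rpow_one]
  have hppm : p * ((p-1)/p) = p - 1 := by field_simp
  calc (p - 1) * ν * X s ^ (p - 2) * X s
      = (p - 1) * ν * (X s ^ (p-2) * X s) := by ring
    _ = (p - 1) * (c ^ (p-1) * c) * X s ^ (p-1) := by rw [e3, e2, hcp]
    _ = c ^ (p-1) * (c * (X s ^ p - 1) ^ (1/p) * p * X s ^ (p - 1) * ((p-1)/p) *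
          (X s ^ p - 1) ^ ((p-1)/p - 1)) := by
        rw [show c ^ (p-1) * (c * (X s ^ p - 1) ^ (1/p) * p * X s ^ (p - 1) * ((p-1)/p) *
          (X s ^ p - 1) ^ ((p-1)/p - 1)) = c ^ (p-1) * c * (p * ((p-1)/p)) * X s ^ (p-1) *
          ((X s ^ p - 1) ^ (1/p) * (X s ^ p - 1) ^ ((p-1)/p - 1)) from by ring,
          e1, hppm]
        ring
end

section
/- Let p ∈ (1,∞), s₀ > 0, and β < 0. Then there exists a unique x > 0 solving (x/|β|^{p'})·(1 - cosh_p(x^{1/p}s₀)^{-p}) = 1, where p' = p/(p-1). -/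
/-!
The integrand of `arccosh_p` is positive on `(1, ∞)` and dominated by `(t - 1) ^ (-1/p)`, which
is integrable at `1` because `1/p < 1`; so `arccosh_p` is strictly increasing on `[1, ∞)`. Its
right inverse `cosh_p` is then strictly increasing and maps `[0, ∞)` onto `[1, ∞)`, hence is
continuous.

Writing `B = |β| ^ p'`, the equation reads `Φ x = B` with `Φ x = x * (1 - g x ^ (-p))` and
`g x = cosh_p (x ^ (1/p) * s₀) > 1`. `Φ` is continuous and strictly increasing, `Φ B ≤ B`, and
`Φ (B / d) ≥ B` for `d = 1 - g B ^ (-p)`; the intermediate value theorem gives a solution and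
monotonicity its uniqueness.
-/

open Real MeasureTheory Set

theorem MonotoneOn.strictMonoOn_of_leftInvOn {α β : Type*} [LinearOrder α] [Preorder β]
    {F : α → β} {c : β → α} {s : Set α} {t : Set β} (hF : MonotoneOn F s)
    (hc : MapsTo c t s) (hinv : LeftInvOn F c t) : StrictMonoOn c t := by
  intro a ha b hb hab
  by_contra! hba
  have := hF (hc hb) (hc ha) hba
  rw [hinv ha, hinv hb] at this
  exact hab.not_ge this

noncomputable def arccoshP (p x : ℝ) : ℝ :=
  ∫ t in (1 : ℝ)..x, (t ^ p - 1) ^ (-(1 / p))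

theorem rpow_sub_one_rpow_le_sub_one_rpow_of_nonpos {p r t : ℝ} (hp : 1 ≤ p) (hr : r ≤ 0)
    (ht : 1 < t) : (t ^ p - 1) ^ r ≤ (t - 1) ^ r := by
  have hle : t - 1 ≤ t ^ p - 1 := by
    simpa using rpow_le_rpow_of_exponent_le ht.le hp
  exact rpow_le_rpow_of_nonpos (by linarith) hle hr

theorem intervalIntegrable_arccoshP_integrand {p b : ℝ} (hp : 1 < p) (hb : 1 ≤ b) :
    IntervalIntegrable (fun t : ℝ => (t ^ p - 1) ^ (-(1 / p))) volume 1 b := by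
  have hexp : -1 < -(1 / p) := by
    have : 1 / p < 1 := (div_lt_one (by linarith)).2 hp
    linarith
  have hdom : IntervalIntegrable (fun t : ℝ => (t - 1) ^ (-(1 / p))) volume 1 b := by
    simpa using
      (intervalIntegral.intervalIntegrable_rpow' (a := 0) (b := b - 1) hexp).comp_sub_right 1
  refine hdom.mono_fun' (by fun_prop : Measurable _).aestronglyMeasurable ?_
  refine (ae_restrict_iff' measurableSet_uIoc).2 (Filter.Eventually.of_forall fun t ht => ?_)
  rw [uIoc_of_le hb] at ht
  have hpos : 0 ≤ t ^ p - 1 := by linarith [one_lt_rpow ht.1 (by linarith : 0 < p)]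
  dsimp only
  rw [Real.norm_of_nonneg (rpow_nonneg hpos _)]
  exact rpow_sub_one_rpow_le_sub_one_rpow_of_nonpos hp.le (by simp; positivity) ht.1

theorem arccoshP_one (p : ℝ) : arccoshP p 1 = 0 :=
  intervalIntegral.integral_same

theorem arccoshP_strictMonoOn {p : ℝ} (hp : 1 < p) : StrictMonoOn (arccoshP p) (Ici 1) := by
  intro a ha b hb hab
  have hia := intervalIntegrable_arccoshP_integrand hp ha
  have hib := intervalIntegrable_arccoshP_integrand hp hb
  have hpos : 0 < ∫ t in a..b, (t ^ p - 1) ^ (-(1 / p)) := by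
    refine intervalIntegral.intervalIntegral_pos_of_pos_on (hia.symm.trans hib) (fun t ht => ?_) hab
    have : 1 < t ^ p := one_lt_rpow (lt_of_le_of_lt ha ht.1) (by linarith)
    exact rpow_pos_of_pos (by linarith) _
  have hsub := intervalIntegral.integral_interval_sub_left hib hia
  unfold arccoshP
  linarith

section RightInverseArccoshP

variable {p : ℝ} {c : ℝ → ℝ}

theorem strictMonoOn_of_leftInvOn_arccoshP (hp : 1 < p) (hc : MapsTo c (Ici 0) (Ici 1))
    (hinv : LeftInvOn (arccoshP p) c (Ici 0)) : StrictMonoOn c (Ici 0) :=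
  (arccoshP_strictMonoOn hp).monotoneOn.strictMonoOn_of_leftInvOn hc hinv

theorem surjOn_of_leftInvOn_arccoshP (hp : 1 < p) (hc : MapsTo c (Ici 0) (Ici 1))
    (hinv : LeftInvOn (arccoshP p) c (Ici 0)) : SurjOn c (Ici 0) (Ici 1) := by
  have hF : MapsTo (arccoshP p) (Ici 1) (Ici 0) := fun y hy => by
    simpa [arccoshP_one] using (arccoshP_strictMonoOn hp).monotoneOn self_mem_Ici hy hy
  exact ((arccoshP_strictMonoOn hp).injOn.rightInvOn_of_leftInvOn hinv hF hc).surjOn hF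

theorem one_lt_of_leftInvOn_arccoshP (hp : 1 < p) (hc : MapsTo c (Ici 0) (Ici 1))
    (hinv : LeftInvOn (arccoshP p) c (Ici 0)) {t : ℝ} (ht : 0 < t) : 1 < c t :=
  lt_of_le_of_lt (hc self_mem_Ici)
    (strictMonoOn_of_leftInvOn_arccoshP hp hc hinv self_mem_Ici ht.le ht)

theorem continuousAt_of_leftInvOn_arccoshP (hp : 1 < p) (hc : MapsTo c (Ici 0) (Ici 1))
    (hinv : LeftInvOn (arccoshP p) c (Ici 0)) {t : ℝ} (ht : 0 < t) : ContinuousAt c t :=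
  (strictMonoOn_of_leftInvOn_arccoshP hp hc hinv).continuousAt_of_image_mem_nhds (Ici_mem_nhds ht)
    (Filter.mem_of_superset (Ici_mem_nhds (one_lt_of_leftInvOn_arccoshP hp hc hinv ht))
      (surjOn_of_leftInvOn_arccoshP hp hc hinv))

end RightInverseArccoshP

section Equation

variable {p : ℝ} {g : ℝ → ℝ}

theorem strictMonoOn_mul_one_sub_rpow_neg (hp : 0 < p) (hg : MonotoneOn g (Ioi 0))
    (hg1 : ∀ x, 0 < x → 1 < g x) : StrictMonoOn (fun x => x * (1 - g x ^ (-p))) (Ioi 0) := by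
  intro x hx y hy hxy
  have hpos : 0 < 1 - g x ^ (-p) :=
    sub_pos.2 (rpow_lt_one_of_one_lt_of_neg (hg1 x hx) (by linarith))
  have hle : 1 - g x ^ (-p) ≤ 1 - g y ^ (-p) := by
    have := rpow_le_rpow_of_nonpos (by linarith [hg1 x hx]) (hg hx hy hxy.le)
      (by linarith : -p ≤ 0)
    linarith
  exact mul_lt_mul hxy hle hpos (le_of_lt hy)

theorem exists_mul_one_sub_rpow_neg_eq (hp : 0 < p) (hg : MonotoneOn g (Ioi 0))
    (hg1 : ∀ x, 0 < x → 1 < g x) (hgc : ContinuousOn g (Ioi 0)) {B : ℝ} (hB : 0 < B) :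
    ∃ x, 0 < x ∧ x * (1 - g x ^ (-p)) = B := by
  set d := 1 - g B ^ (-p)
  have hd_pos : 0 < d := sub_pos.2 (rpow_lt_one_of_one_lt_of_neg (hg1 B hB) (by linarith))
  have hd_lt : d < 1 := sub_lt_self 1 (rpow_pos_of_pos (by linarith [hg1 B hB]) _)
  have hBd : B ≤ B / d := le_div_self hB.le hd_pos hd_lt.le
  have hlow : B * (1 - g B ^ (-p)) ≤ B := mul_le_of_le_one_right hB.le hd_lt.le
  have hhigh : B ≤ B / d * (1 - g (B / d) ^ (-p)) := by
    have := rpow_le_rpow_of_nonpos (by linarith [hg1 B hB]) (hg hB (hB.trans_le hBd) hBd)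
      (by linarith : -p ≤ 0)
    calc B = B / d * d := (div_mul_cancel₀ B hd_pos.ne').symm
      _ ≤ B / d * (1 - g (B / d) ^ (-p)) := by gcongr; linarith
  have hcont : ContinuousOn (fun x => x * (1 - g x ^ (-p))) (Icc B (B / d)) := by
    refine continuousOn_id.mul (continuousOn_const.sub ?_)
    exact ((hgc.mono fun x hx => hB.trans_le hx.1).rpow_const fun x hx =>
      Or.inl (by linarith [hg1 x (hB.trans_le hx.1)]))
  obtain ⟨x, hx, hxB⟩ := intermediate_value_Icc hBd hcont ⟨hlow, hhigh⟩
  exact ⟨x, hB.trans_le hx.1, hxB⟩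

theorem existsUnique_mul_one_sub_rpow_neg_eq (hp : 0 < p) (hg : MonotoneOn g (Ioi 0))
    (hg1 : ∀ x, 0 < x → 1 < g x) (hgc : ContinuousOn g (Ioi 0)) {B : ℝ} (hB : 0 < B) :
    ∃! x, 0 < x ∧ x * (1 - g x ^ (-p)) = B := by
  obtain ⟨x, hx, hxB⟩ := exists_mul_one_sub_rpow_neg_eq hp hg hg1 hgc hB
  refine ⟨x, ⟨hx, hxB⟩, fun y ⟨hy, hyB⟩ => ?_⟩
  exact (strictMonoOn_mul_one_sub_rpow_neg hp hg hg1).injOn hy hx (hyB.trans hxB.symm)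

end Equation

theorem exists_unique_negative_eigenvalue_eq_general (p : ℝ) (hp : 1 < p)
    (s₀ β : ℝ) (hs₀ : 0 < s₀) (hβ : β < 0)
    (p' : ℝ)
    (arccoshp : ℝ → ℝ)
    (harccosh : ∀ x, 1 ≤ x → arccoshp x = ∫ t in (1:ℝ)..x, (t ^ p - 1) ^ (-(1/p)))
    (coshp : ℝ → ℝ)
    (hcosh : ∀ t, 0 ≤ t → 1 ≤ coshp t ∧ arccoshp (coshp t) = t) :
    ∃! x : ℝ, 0 < x ∧ (x / |β| ^ p') * (1 - (coshp (x ^ (1/p) * s₀)) ^ (-p)) = 1 := by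
  have hmaps : MapsTo coshp (Ici 0) (Ici 1) := fun t ht => (hcosh t ht).1
  have hinv : LeftInvOn (arccoshP p) coshp (Ici 0) := fun t ht => by
    rw [arccoshP, ← harccosh _ (hcosh t ht).1, (hcosh t ht).2]
  have hp0 : 0 < p := by linarith
  have harg : ∀ x : ℝ, 0 < x → 0 < x ^ (1 / p) * s₀ := fun x hx => by positivity
  have hmono : MonotoneOn (fun x : ℝ => coshp (x ^ (1 / p) * s₀)) (Ioi 0) := by
    intro x (hx : 0 < x) y _ hxy
    have hle : x ^ (1 / p) * s₀ ≤ y ^ (1 / p) * s₀ := by gcongr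
    exact (strictMonoOn_of_leftInvOn_arccoshP hp hmaps hinv).monotoneOn (harg x hx).le
      ((harg x hx).le.trans hle) hle
  have hcont : ContinuousOn (fun x : ℝ => coshp (x ^ (1 / p) * s₀)) (Ioi 0) := fun x hx =>
    ContinuousAt.continuousWithinAt <|
      (continuousAt_of_leftInvOn_arccoshP hp hmaps hinv (harg x hx)).comp
        (f := fun x => x ^ (1 / p) * s₀)
        ((continuousAt_rpow_const x _ (Or.inl (ne_of_gt hx))).mul continuousAt_const)
  have hB : 0 < |β| ^ p' := rpow_pos_of_pos (abs_pos.2 hβ.ne) _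
  simpa only [div_mul_eq_mul_div, div_eq_one_iff_eq hB.ne'] using
    existsUnique_mul_one_sub_rpow_neg_eq hp0 hmono
      (fun x hx => one_lt_of_leftInvOn_arccoshP hp hmaps hinv (harg x hx)) hcont hB

theorem exists_unique_negative_eigenvalue_eq (p : ℝ) (hp : 1 < p)
    (s₀ β : ℝ) (hs₀ : 0 < s₀) (hβ : β < 0)
    (p' : ℝ) (hp' : p' = p / (p - 1))
    (arccoshp : ℝ → ℝ)
    (harccosh : ∀ x, 1 ≤ x → arccoshp x = ∫ t in (1:ℝ)..x, (t ^ p - 1) ^ (-(1/p)))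
    (coshp : ℝ → ℝ)
    (hcosh : ∀ t, 0 ≤ t → 1 ≤ coshp t ∧ arccoshp (coshp t) = t) :
    ∃! x : ℝ, 0 < x ∧ (x / |β| ^ p') * (1 - (coshp (x ^ (1/p) * s₀)) ^ (-p)) = 1 :=
  exists_unique_negative_eigenvalue_eq_general p hp s₀ β hs₀ hβ p' arccoshp harccosh coshp hcosh
end

section
/- Let p ∈ (1,∞), β < 0, s₀ > 0, and let μ₁(β,s₀) < 0 be the first eigenvalue of the 1D Robin problem (|X'|^{p-2}X')' + μ|X|^{p-2}X = 0 on (0,s₀) with X'(0) = 0 and |X'(s₀)|^{p-2}X'(s₀) + β|X(s₀)|^{p-2}X(s₀) = 0. Then μ₁(β, s₀) ≤ -(p-1)|β|^{p/(p-1)}. -/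
/-! Since `cosh_p ≥ 1`, the denominator `1 - cosh_p(…)^(-p)` lies in `(0, 1]`, so the defining
relation gives `-μ₁ / (p - 1) ≥ |β| ^ p'`. -/

open Real

lemma le_of_eq_div_of_le_one {a b d : ℝ} (hb : 0 ≤ b) (ha : 0 < a) (hd : d ≤ 1) (h : a = b / d) :
    b ≤ a := by
  have hd_pos : 0 < d := by
    by_contra! hd_nonpos
    have : b / d ≤ 0 := div_nonpos_of_nonneg_of_nonpos hb hd_nonpos
    linarith
  rw [h, le_div_iff₀ hd_pos]
  nlinarith

theorem mu1_negative_upper_bound_general (p : ℝ) (hp : 1 < p) (β s₀ : ℝ) (hs₀ : 0 < s₀)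
    (p' : ℝ) (hp' : p' = p / (p - 1))
    (arccoshp : ℝ → ℝ)
    (coshp : ℝ → ℝ)
    (hcosh : ∀ t, 0 ≤ t → 1 ≤ coshp t ∧ arccoshp (coshp t) = t)
    (μ₁ : ℝ) (hμ₁neg : μ₁ < 0)
    (hμ₁ : -μ₁ / (p - 1) =
      |β| ^ p' / (1 - (coshp ((-μ₁ / (p - 1)) ^ (1/p) * s₀)) ^ (-p))) :
    μ₁ ≤ -(p - 1) * |β| ^ (p / (p - 1)) := by
  have hp1 : 0 < p - 1 := by linarith
  have hA : 0 < -μ₁ / (p - 1) := div_pos (by linarith) hp1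
  have hcosh_ge : 1 ≤ coshp ((-μ₁ / (p - 1)) ^ (1/p) * s₀) := (hcosh _ (by positivity)).1
  have hβA : |β| ^ p' ≤ -μ₁ / (p - 1) :=
    le_of_eq_div_of_le_one (by positivity) hA
      (sub_le_self _ (rpow_nonneg (by linarith) _)) hμ₁
  rw [hp', le_div_iff₀ hp1] at hβA
  linarith

theorem mu1_negative_upper_bound (p : ℝ) (hp : 1 < p) (β s₀ : ℝ) (hβ : β < 0) (hs₀ : 0 < s₀)
    (p' : ℝ) (hp' : p' = p / (p - 1))
    (arccoshp : ℝ → ℝ)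
    (harccosh : ∀ x, 1 ≤ x → arccoshp x = ∫ t in (1:ℝ)..x, (t ^ p - 1) ^ (-(1/p)))
    (coshp : ℝ → ℝ)
    (hcosh : ∀ t, 0 ≤ t → 1 ≤ coshp t ∧ arccoshp (coshp t) = t)
    (μ₁ : ℝ) (hμ₁neg : μ₁ < 0)
    (hμ₁ : -μ₁ / (p - 1) =
      |β| ^ p' / (1 - (coshp ((-μ₁ / (p - 1)) ^ (1/p) * s₀)) ^ (-p))) :
    μ₁ ≤ -(p - 1) * |β| ^ (p / (p - 1)) :=
  mu1_negative_upper_bound_general p hp β s₀ hs₀ p' hp' arccoshp coshp hcosh μ₁ hμ₁neg hμ₁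
end

section
/- Let p ∈ (1,∞) and let F : ℝ^N → [0,∞) be a convex norm. For u, v > 0 smooth positive functions and t ∈ [0,1], define w_t = (t u^p + (1-t) v^p)^{1/p}. Then pointwise, F(∇w_t)^p ≤ t F(∇u)^p + (1-t) F(∇v)^p. -/
open Real

private lemma hidden_convexity_aux (a b X Y : ℝ) (hb : b ≠ 0) (hY : Y ≠ 0) :
    a * Y / b * (b / Y * X) = a * X := by
  field_simp

theorem hidden_convexity (N : ℕ) (hN : 1 ≤ N) (p : ℝ) (hp : 1 < p)
    (F : EuclideanSpace ℝ (Fin N) → ℝ)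
    (hF0 : ∀ ξ, 0 ≤ F ξ)
    (hconv : ConvexOn ℝ Set.univ F)
    (hhom : ∀ (c : ℝ) (ξ), F (c • ξ) = |c| * F ξ)
    (a : ℝ) (ha : 0 < a) (hlow : ∀ ξ, a * ‖ξ‖ ≤ F ξ)
    (Ω : Set (EuclideanSpace ℝ (Fin N))) (hΩ : IsOpen Ω)
    (u v : EuclideanSpace ℝ (Fin N) → ℝ)
    (hu : ∀ x ∈ Ω, 0 < u x) (hv : ∀ x ∈ Ω, 0 < v x)
    (hud : ∀ x ∈ Ω, DifferentiableAt ℝ u x) (hvd : ∀ x ∈ Ω, DifferentiableAt ℝ v x)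
    (t : ℝ) (ht : t ∈ Set.Icc (0:ℝ) 1)
    (w : EuclideanSpace ℝ (Fin N) → ℝ)
    (hw : ∀ x, w x = (t * u x ^ p + (1 - t) * v x ^ p) ^ (1/p)) :
    ∀ x ∈ Ω, F (gradient w x) ^ p ≤ t * F (gradient u x) ^ p
      + (1 - t) * F (gradient v x) ^ p := by
  intro x hx
  obtain ⟨ht0, ht1⟩ := ht
  have hp0 : (0:ℝ) < p := lt_trans one_pos hp
  have hU : 0 < u x := hu x hx
  have hV : 0 < v x := hv x hx
  have hUp : 0 < u x ^ p := Real.rpow_pos_of_pos hU p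
  have hVp : 0 < v x ^ p := Real.rpow_pos_of_pos hV p
  have hS : 0 < t * u x ^ p + (1 - t) * v x ^ p := by
    rcases lt_or_eq_of_le ht1 with h | h
    · have h1 : 0 < (1 - t) * v x ^ p := mul_pos (by linarith) hVp
      have h2 : 0 ≤ t * u x ^ p := mul_nonneg ht0 hUp.le
      linarith
    · have h1 : 0 < t * u x ^ p := mul_pos (by linarith) hUp
      have h2 : 0 ≤ (1 - t) * v x ^ p := mul_nonneg (by linarith) hVp.le
      linarith
  set S : ℝ := t * u x ^ p + (1 - t) * v x ^ p with hS_def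
  have hW : 0 < w x := by rw [hw x]; exact Real.rpow_pos_of_pos hS (1/p)
  have hWp : w x ^ p = S := by
    rw [hw x, ← Real.rpow_mul hS.le, one_div, inv_mul_cancel₀ hp0.ne', Real.rpow_one]
  -- gradient computation
  have hgu : HasGradientAt u (gradient u x) x := (hud x hx).hasGradientAt
  have hgv : HasGradientAt v (gradient v x) x := (hvd x hx).hasGradientAt
  set c : ℝ := t * u x ^ (p - 1) * S ^ (1/p - 1) with hc_def
  set d : ℝ := (1 - t) * v x ^ (p - 1) * S ^ (1/p - 1) with hd_def
  have h1 : HasFDerivAt (fun y => u y ^ p)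
      ((p * u x ^ (p - 1)) • (InnerProductSpace.toDual ℝ _ (gradient u x) :
        EuclideanSpace ℝ (Fin N) →L[ℝ] ℝ)) x :=
    hgu.hasFDerivAt.rpow_const (Or.inl hU.ne')
  have h2 : HasFDerivAt (fun y => v y ^ p)
      ((p * v x ^ (p - 1)) • (InnerProductSpace.toDual ℝ _ (gradient v x) :
        EuclideanSpace ℝ (Fin N) →L[ℝ] ℝ)) x :=
    hgv.hasFDerivAt.rpow_const (Or.inl hV.ne')
  have hSd : HasFDerivAt (fun y => t * u y ^ p + (1 - t) * v y ^ p)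
      (t • ((p * u x ^ (p - 1)) • (InnerProductSpace.toDual ℝ _ (gradient u x) :
        EuclideanSpace ℝ (Fin N) →L[ℝ] ℝ)) +
       (1 - t) • ((p * v x ^ (p - 1)) • (InnerProductSpace.toDual ℝ _ (gradient v x) :
        EuclideanSpace ℝ (Fin N) →L[ℝ] ℝ))) x :=
    (h1.const_mul t).add (h2.const_mul (1 - t))
  have hWd : HasFDerivAt w
      ((1/p * S ^ (1/p - 1)) •
        (t • ((p * u x ^ (p - 1)) • (InnerProductSpace.toDual ℝ _ (gradient u x) :
          EuclideanSpace ℝ (Fin N) →L[ℝ] ℝ)) +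
         (1 - t) • ((p * v x ^ (p - 1)) • (InnerProductSpace.toDual ℝ _ (gradient v x) :
          EuclideanSpace ℝ (Fin N) →L[ℝ] ℝ)))) x := by
    have := hSd.rpow_const (p := 1/p) (Or.inl hS.ne')
    have hweq : w = fun y => (t * u y ^ p + (1 - t) * v y ^ p) ^ (1/p) := funext hw
    rw [hweq]
    exact this
  have hgw : gradient w x = c • gradient u x + d • gradient v x := by
    have key : HasFDerivAt w
        ((InnerProductSpace.toDual ℝ _ (c • gradient u x + d • gradient v x) :
          EuclideanSpace ℝ (Fin N) →L[ℝ] ℝ)) x := by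
      convert hWd using 1
      ext y
      simp only [ContinuousLinearMap.add_apply, ContinuousLinearMap.smul_apply,
        InnerProductSpace.toDual_apply_apply, inner_add_left, real_inner_smul_left, smul_eq_mul]
      rw [hc_def, hd_def]
      field_simp
    simpa only [LinearIsometryEquiv.symm_apply_apply] using key.hasGradientAt.gradient
  -- convexity argument
  set lam : ℝ := t * u x ^ p / S with hlam_def
  have hlam0 : 0 ≤ lam := div_nonneg (mul_nonneg ht0 hUp.le) hS.le
  have hlam1 : 0 ≤ 1 - lam := by
    rw [hlam_def, sub_nonneg, div_le_one hS]
    nlinarith [mul_nonneg (sub_nonneg.2 ht1) hVp.le]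
  have h1lam : 1 - lam = (1 - t) * v x ^ p / S := by
    rw [hlam_def]
    field_simp
    rw [hS_def]
    ring
  have hcc : c = lam * (w x / u x) := by
    rw [hc_def, hlam_def, hw x, ← hS_def, Real.rpow_sub hS, Real.rpow_sub hU,
      Real.rpow_one, Real.rpow_one]
    field_simp [hU.ne', hS.ne']
  have hdd : d = (1 - lam) * (w x / v x) := by
    rw [hd_def, h1lam, hw x, ← hS_def, Real.rpow_sub hS, Real.rpow_sub hV,
      Real.rpow_one, Real.rpow_one]
    field_simp [hV.ne', hS.ne']
  set A : ℝ := (w x / u x) * F (gradient u x) with hA_def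
  set B : ℝ := (w x / v x) * F (gradient v x) with hB_def
  have hA0 : 0 ≤ A := mul_nonneg (div_pos hW hU).le (hF0 _)
  have hB0 : 0 ≤ B := mul_nonneg (div_pos hW hV).le (hF0 _)
  have step1 : F (gradient w x) ≤ lam * A + (1 - lam) * B := by
    have hdecomp : gradient w x =
        lam • ((w x / u x) • gradient u x) + (1 - lam) • ((w x / v x) • gradient v x) := by
      rw [hgw, smul_smul, smul_smul, ← hcc, ← hdd]
    rw [hdecomp]
    calc F (lam • ((w x / u x) • gradient u x) + (1 - lam) • ((w x / v x) • gradient v x))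
        ≤ lam * F ((w x / u x) • gradient u x) + (1 - lam) * F ((w x / v x) • gradient v x) :=
          hconv.2 (Set.mem_univ _) (Set.mem_univ _) hlam0 hlam1 (by ring)
      _ = lam * A + (1 - lam) * B := by
          rw [hhom, hhom, abs_of_pos (div_pos hW hU), abs_of_pos (div_pos hW hV),
            hA_def, hB_def]
  have step2 : F (gradient w x) ^ p ≤ (lam * A + (1 - lam) * B) ^ p :=
    Real.rpow_le_rpow (hF0 _) step1 hp0.le
  have step3 : (lam * A + (1 - lam) * B) ^ p ≤ lam * A ^ p + (1 - lam) * B ^ p := by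
    have := (convexOn_rpow hp.le).2 (Set.mem_Ici.2 hA0) (Set.mem_Ici.2 hB0)
      hlam0 hlam1 (by ring)
    simpa only [smul_eq_mul] using this
  have hWU : (w x / u x) ^ p = S / u x ^ p := by
    rw [Real.div_rpow hW.le hU.le, hWp]
  have hWV : (w x / v x) ^ p = S / v x ^ p := by
    rw [Real.div_rpow hW.le hV.le, hWp]
  have step4 : lam * A ^ p = t * F (gradient u x) ^ p := by
    rw [hA_def, Real.mul_rpow (div_pos hW hU).le (hF0 _), hWU, hlam_def]
    exact hidden_convexity_aux t S (F (gradient u x) ^ p) (u x ^ p) hS.ne' hUp.ne'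
  have step5 : (1 - lam) * B ^ p = (1 - t) * F (gradient v x) ^ p := by
    rw [hB_def, Real.mul_rpow (div_pos hW hV).le (hF0 _), hWV, h1lam]
    exact hidden_convexity_aux (1 - t) S (F (gradient v x) ^ p) (v x ^ p) hS.ne' hVp.ne'
  calc F (gradient w x) ^ p ≤ lam * A ^ p + (1 - lam) * B ^ p := le_trans step2 step3
    _ = t * F (gradient u x) ^ p + (1 - t) * F (gradient v x) ^ p := by rw [step4, step5]
end

section
/- Let p ∈ (1,∞), β > 0, μ̃ > 0 with μ̃^{1/p}s₀ ∈ (0, π_p/2), and suppose cos_p(s₀ μ̃^{1/p}) = (μ̃/(μ̃ + β^{p'}))^{1/p} where p' = p/(p-1). Then μ̃ ≥ (π_p/2)^p / (s₀ + (π_p/2)β^{-1/(p-1)})^p. -/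
open Real

theorem mu_tilde_lower_bound (p : ℝ) (hp : 1 < p) (β s₀ μ' : ℝ)
    (hβ : 0 < β) (hs₀ : 0 < s₀) (hμ' : 0 < μ')
    (p' : ℝ) (hp' : p' = p / (p - 1))
    (πp : ℝ) (hπp : πp = 2 * π / (p * Real.sin (π / p)))
    (arccosp : ℝ → ℝ)
    (harccos : ∀ x ∈ Set.Icc (0:ℝ) 1, arccosp x = ∫ t in x..1, (1 - t ^ p) ^ (-(1/p)))
    (cosp : ℝ → ℝ)
    (hcos : ∀ t ∈ Set.Icc 0 (πp / 2), cosp t ∈ Set.Icc (0:ℝ) 1 ∧ arccosp (cosp t) = t)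
    (hrange : μ' ^ (1/p) * s₀ ∈ Set.Ioo 0 (πp / 2))
    (heq : cosp (s₀ * μ' ^ (1/p)) = (μ' / (μ' + β ^ p')) ^ (1/p)) :
    μ' ≥ (πp / 2) ^ p / (s₀ + (πp / 2) * β ^ (-(1/(p-1)))) ^ p := by
  have hp0 : (0:ℝ) < p := lt_trans one_pos hp
  set f : ℝ → ℝ := fun t => (1 - t ^ p) ^ (-(1/p)) with hfdef
  -- basic positivity facts
  set s : ℝ := s₀ * μ' ^ (1/p) with hsdef
  have hs_mem : s ∈ Set.Ioo 0 (πp / 2) := by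
    rw [hsdef, mul_comm]; exact hrange
  have hspos : 0 < s := hs_mem.1
  have hπpos : 0 < πp / 2 := lt_trans hspos hs_mem.2
  set x : ℝ := (μ' / (μ' + β ^ p')) ^ (1/p) with hxdef
  have hβp' : 0 < β ^ p' := Real.rpow_pos_of_pos hβ p'
  have hratio0 : 0 < μ' / (μ' + β ^ p') := by positivity
  have hratio1 : μ' / (μ' + β ^ p') < 1 := by
    rw [div_lt_one (by linarith)]; linarith
  have hx0 : 0 < x := Real.rpow_pos_of_pos hratio0 _
  have hx1 : x < 1 :=
    Real.rpow_lt_one hratio0.le hratio1 (by positivity)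
  -- monotonicity of f
  have hmono : ∀ a b : ℝ, 0 ≤ a → a ≤ b → b < 1 → f a ≤ f b := by
    intro a b ha hab hb1
    have hbp : b ^ p < 1 := by
      rcases eq_or_lt_of_le (ha.trans hab) with h | h
      · rw [← h, Real.zero_rpow hp0.ne']; norm_num
      · exact Real.rpow_lt_one (by linarith) hb1 hp0
    have hap : a ^ p ≤ b ^ p := Real.rpow_le_rpow ha hab hp0.le
    exact Real.rpow_le_rpow_of_nonpos (by linarith) (by linarith)
      (neg_nonpos.mpr (by positivity))
  -- nonnegativity of f on [0,1]
  have hfnn : ∀ t ∈ Set.Icc (0:ℝ) 1, 0 ≤ f t := by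
    intro t ht
    have : t ^ p ≤ 1 := Real.rpow_le_one ht.1 ht.2 hp0.le
    exact Real.rpow_nonneg (by linarith) _
  -- continuity of f on [a,b] ⊆ [0,1)
  have hfcont : ∀ a b : ℝ, 0 ≤ a → b < 1 → ContinuousOn f (Set.Icc a b) := by
    intro a b ha hb1
    intro t ht
    have ht0 : 0 ≤ t := ha.trans ht.1
    have ht1 : t < 1 := lt_of_le_of_lt ht.2 hb1
    have htp : t ^ p < 1 := by
      rcases eq_or_lt_of_le ht0 with h | h
      · rw [← h, Real.zero_rpow hp0.ne']; norm_num
      · exact Real.rpow_lt_one (le_of_lt h) ht1 hp0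
    have h1 : ContinuousAt (fun u : ℝ => u ^ p) t :=
      Real.continuousAt_rpow_const t p (Or.inr hp0.le)
    have h2 : ContinuousAt (fun u : ℝ => 1 - u ^ p) t :=
      continuousAt_const.sub h1
    exact (h2.rpow_const (Or.inl (by linarith))).continuousWithinAt
  -- apply hcos at s
  have hsc := hcos s ⟨hspos.le, hs_mem.2.le⟩
  rw [heq] at hsc
  have hIx : (∫ t in x..1, f t) = s := by
    rw [← harccos x hsc.1]; exact hsc.2
  -- apply hcos at πp/2
  obtain ⟨hcIcc, hcarc⟩ := hcos (πp / 2) ⟨hπpos.le, le_refl _⟩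
  set c : ℝ := cosp (πp / 2) with hcdef
  have hIc : (∫ t in c..1, f t) = πp / 2 := by
    rw [← harccos c hcIcc]; exact hcarc
  have hc0 : 0 ≤ c := hcIcc.1
  have hc1 : c < 1 := by
    rcases lt_or_eq_of_le hcIcc.2 with h | h
    · exact h
    · exfalso
      rw [h, intervalIntegral.integral_same] at hIc
      linarith
  -- integrability of f on [x,1] (from positivity of the integral)
  have hintx1 : IntervalIntegrable f MeasureTheory.volume x 1 := by
    by_contra h
    rw [intervalIntegral.integral_undef h] at hIx
    linarith
  -- key inequality: πp/2 ≤ s + (πp/2) * x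
  have hkey : πp / 2 ≤ s + (πp / 2) * x := by
    rcases le_or_gt c x with hcx | hxc
    · -- c ≤ x case
      have hintcx : IntervalIntegrable f MeasureTheory.volume c x :=
        (hfcont c x hc0 hx1).intervalIntegrable_of_Icc hcx
      have hsplit : (∫ t in c..x, f t) + (∫ t in x..1, f t) = ∫ t in c..1, f t :=
        intervalIntegral.integral_add_adjacent_intervals hintcx hintx1
      have hfx0 : 0 ≤ f x := hfnn x ⟨hx0.le, hx1.le⟩
      -- upper bound on ∫ c..x
      have hA : (∫ t in c..x, f t) ≤ (x - c) * f x := by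
        have := intervalIntegral.integral_mono_on hcx hintcx
          (intervalIntegrable_const) (fun t ht => hmono t x (hc0.trans ht.1) ht.2 hx1)
        rwa [intervalIntegral.integral_const, smul_eq_mul] at this
      -- lower bound on ∫ x..1
      have hB : (1 - x) * f x ≤ ∫ t in x..1, f t := by
        have hae : (fun _ : ℝ => f x) ≤ᶠ[MeasureTheory.ae
            (MeasureTheory.volume.restrict (Set.Icc x 1))] f := by
          have hne : ∀ᵐ t : ℝ, t ≠ (1:ℝ) := by
            refine MeasureTheory.ae_iff.mpr ?_
            simp only [ne_eq, not_not]
            rw [show {a : ℝ | a = 1} = {(1:ℝ)} from rfl]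
            exact Real.volume_singleton
          have hmem := MeasureTheory.ae_restrict_mem (μ := MeasureTheory.volume)
            (measurableSet_Icc : MeasurableSet (Set.Icc x 1))
          filter_upwards [hmem, MeasureTheory.ae_restrict_of_ae hne] with t ht htne
          exact hmono x t hx0.le ht.1 (lt_of_le_of_ne ht.2 htne)
        have := intervalIntegral.integral_mono_ae_restrict hx1.le
          (intervalIntegrable_const) hintx1 hae
        rwa [intervalIntegral.integral_const, smul_eq_mul] at this
      have hIcx_nn : 0 ≤ ∫ t in c..x, f t :=
        intervalIntegral.integral_nonneg hcx
          (fun t ht => hfnn t ⟨hc0.trans ht.1, ht.2.trans hx1.le⟩)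
      -- combine
      have h1 : (1 - x) * (∫ t in c..x, f t) ≤ x * ∫ t in x..1, f t := by
        nlinarith [hA, hB, hfx0, hx0.le, hx1.le, hc0]
      rw [hIx] at h1
      have : (∫ t in c..x, f t) = πp / 2 - s := by
        rw [hIx] at hsplit; rw [hIc] at hsplit; linarith
      rw [this] at h1
      nlinarith
    · -- x < c case: πp/2 ≤ s
      have hintxc : IntervalIntegrable f MeasureTheory.volume x c :=
        (hfcont x c hx0.le hc1).intervalIntegrable_of_Icc hxc.le
      have hintc1 : IntervalIntegrable f MeasureTheory.volume c 1 := by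
        by_contra h
        rw [intervalIntegral.integral_undef h] at hIc
        linarith
      have hsplit : (∫ t in x..c, f t) + (∫ t in c..1, f t) = ∫ t in x..1, f t :=
        intervalIntegral.integral_add_adjacent_intervals hintxc hintc1
      have hnn : 0 ≤ ∫ t in x..c, f t :=
        intervalIntegral.integral_nonneg hxc.le
          (fun t ht => hfnn t ⟨hx0.le.trans ht.1, ht.2.trans hc1.le⟩)
      rw [hIx, hIc] at hsplit
      nlinarith [hx0.le]
  -- bound x by μ'^{1/p} * β^{-(1/(p-1))}
  have hp1 : (0:ℝ) < p - 1 := by linarith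
  have hxle : x ≤ μ' ^ (1/p) * β ^ (-(1/(p-1))) := by
    have hexp : p' * (1/p) = 1/(p-1) := by
      rw [hp']; field_simp
    have hb : β ^ (1/(p-1)) ≤ (μ' + β ^ p') ^ (1/p) := by
      have h1 : (β ^ p') ^ (1/p) ≤ (μ' + β ^ p') ^ (1/p) :=
        Real.rpow_le_rpow hβp'.le (by linarith) (by positivity)
      rwa [← Real.rpow_mul hβ.le, hexp] at h1
    have hbpos : 0 < β ^ (1/(p-1)) := Real.rpow_pos_of_pos hβ _
    rw [hxdef, Real.div_rpow hμ'.le (by linarith), Real.rpow_neg hβ.le,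
      ← div_eq_mul_inv]
    exact div_le_div_of_nonneg_left (Real.rpow_nonneg hμ'.le _) hbpos hb
  -- final algebra
  set D : ℝ := s₀ + (πp / 2) * β ^ (-(1/(p-1))) with hDdef
  have hDpos : 0 < D := by
    have : 0 < β ^ (-(1/(p-1))) := Real.rpow_pos_of_pos hβ _
    positivity
  have hfin : πp / 2 ≤ μ' ^ (1/p) * D := by
    have hmul : (πp / 2) * x ≤ (πp / 2) * (μ' ^ (1/p) * β ^ (-(1/(p-1)))) :=
      mul_le_mul_of_nonneg_left hxle hπpos.le
    have hring : μ' ^ (1/p) * D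
        = s₀ * μ' ^ (1/p) + (πp / 2) * (μ' ^ (1/p) * β ^ (-(1/(p-1)))) := by
      rw [hDdef]; ring
    rw [hring]
    linarith [hkey, hmul, hsdef.le, hsdef.ge]
  have hpow : (πp / 2) ^ p ≤ μ' * D ^ p := by
    have h1 : (πp / 2) ^ p ≤ (μ' ^ (1/p) * D) ^ p :=
      Real.rpow_le_rpow hπpos.le hfin hp0.le
    rwa [Real.mul_rpow (Real.rpow_nonneg hμ'.le _) hDpos.le,
      ← Real.rpow_mul hμ'.le, one_div_mul_cancel hp0.ne', Real.rpow_one] at h1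
  have hDp : 0 < D ^ p := Real.rpow_pos_of_pos hDpos p
  rw [ge_iff_le, div_le_iff₀ hDp]
  linarith
end

section
/- Let p ∈ (1,∞), β < 0, and X(s) = cosh_p((-μ̃)^{1/p}s) with μ̃ < 0, satisfying the boundary condition X'(s₀) = |β|^{1/(p-1)}X(s₀). Then -μ̃/|β|^{p'} = 1/(1 - cosh_p((-μ̃)^{1/p}s₀)^{-p}), where p' = p/(p-1). -/
/-!
At the boundary point write `c = cosh_p((-μ̃)^{1/p} s₀) ≥ 1`. The ODE and the boundary condition give
`(-μ̃)^{1/p} (c^p - 1)^{1/p} = |β|^{1/(p-1)} c`; raising this to the power `p` yields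
`-μ̃ (c^p - 1) = |β|^{p'} c^p`, which is the claimed relation after dividing by `|β|^{p'} c^p`.
-/

open Real

lemma mul_rpow_sub_one_eq_of_rpow_one_div_eq {p m b c : ℝ} (hp : 0 < p) (hm : 0 ≤ m)
    (hb : 0 ≤ b) (hc : 1 ≤ c)
    (h : m ^ (1 / p) * (c ^ p - 1) ^ (1 / p) = b ^ (1 / (p - 1)) * c) :
    m * (c ^ p - 1) = b ^ (p / (p - 1)) * c ^ p := by
  have hcp : 0 ≤ c ^ p - 1 := sub_nonneg.2 (one_le_rpow hc (by positivity))
  have := congrArg (· ^ p) h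
  rwa [mul_rpow (by positivity) (by positivity), one_div, rpow_inv_rpow hm hp.ne',
    rpow_inv_rpow hcp hp.ne', mul_rpow (by positivity) (by positivity), ← rpow_mul hb,
    one_div_mul_eq_div] at this

lemma div_eq_one_div_one_sub_inv_of_mul_sub_one_eq {m B x : ℝ} (hm : 0 ≤ m) (hB : 0 < B)
    (hx : 0 < x) (h : m * (x - 1) = B * x) :
    m / B = 1 / (1 - x⁻¹) := by
  have hx1 : 0 < x - 1 := pos_of_mul_pos_right (h ▸ mul_pos hB hx) hm
  have hsub : 1 - x⁻¹ = (x - 1) / x := by field_simp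
  rw [hsub, one_div_div, div_eq_div_iff hB.ne' hx1.ne']
  linarith

theorem cosh_p_boundary_relation_general (p : ℝ) (hp : 1 < p) (β s₀ μ' : ℝ)
    (hβ : β < 0) (hs₀ : 0 < s₀) (hμ' : μ' < 0)
    (p' : ℝ) (hp' : p' = p / (p - 1))
    (arccoshp : ℝ → ℝ)
    (coshp : ℝ → ℝ)
    (hcosh : ∀ t, 0 ≤ t → 1 ≤ coshp t ∧ arccoshp (coshp t) = t)
    (X X' : ℝ → ℝ)
    (hX : ∀ s, X s = coshp ((-μ') ^ (1/p) * s))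
    (hX' : ∀ s ∈ Set.Icc 0 s₀, X' s = (-μ') ^ (1/p) * (X s ^ p - 1) ^ (1/p))
    (hbc : X' s₀ = |β| ^ (1/(p-1)) * X s₀) :
    -μ' / |β| ^ p' = 1 / (1 - (coshp ((-μ') ^ (1/p) * s₀)) ^ (-p)) := by
  have hμ : 0 < -μ' := neg_pos.2 hμ'
  have hc : 1 ≤ X s₀ := hX s₀ ▸ (hcosh _ (by positivity)).1
  have hboundary : (-μ') ^ (1/p) * (X s₀ ^ p - 1) ^ (1/p) = |β| ^ (1/(p-1)) * X s₀ := by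
    rw [← hX' s₀ ⟨hs₀.le, le_rfl⟩, hbc]
  have hpow :=
    mul_rpow_sub_one_eq_of_rpow_one_div_eq (by linarith) hμ.le (abs_nonneg β) hc hboundary
  rw [hp', ← hX, rpow_neg (by linarith)]
  exact div_eq_one_div_one_sub_inv_of_mul_sub_one_eq hμ.le
    (rpow_pos_of_pos (abs_pos.2 hβ.ne) _) (by positivity) hpow

theorem cosh_p_boundary_relation (p : ℝ) (hp : 1 < p) (β s₀ μ' : ℝ)
    (hβ : β < 0) (hs₀ : 0 < s₀) (hμ' : μ' < 0)
    (p' : ℝ) (hp' : p' = p / (p - 1))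
    (arccoshp : ℝ → ℝ)
    (harccosh : ∀ x, 1 ≤ x → arccoshp x = ∫ s in (1:ℝ)..x, (s ^ p - 1) ^ (-(1/p)))
    (coshp : ℝ → ℝ)
    (hcosh : ∀ t, 0 ≤ t → 1 ≤ coshp t ∧ arccoshp (coshp t) = t)
    (X X' : ℝ → ℝ)
    (hX : ∀ s, X s = coshp ((-μ') ^ (1/p) * s))
    (hX' : ∀ s ∈ Set.Icc 0 s₀, X' s = (-μ') ^ (1/p) * (X s ^ p - 1) ^ (1/p))
    (hbc : X' s₀ = |β| ^ (1/(p-1)) * X s₀) :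
    -μ' / |β| ^ p' = 1 / (1 - (coshp ((-μ') ^ (1/p) * s₀)) ^ (-p)) :=
  cosh_p_boundary_relation_general p hp β s₀ μ' hβ hs₀ hμ' p' hp' arccoshp coshp hcosh X X' hX hX'
    hbc
end
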